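/- arXiv:math/0307390 — 5 statements merged into one kernel-verified Lean document; each statement's English description precedes it below -/
import Mathlib

section
/- Let V be a simple H-module on which x^{pr} and y^{pr} both act as zero. Then there exist m ∈ Z/rZ and a positive integer D ≤ pr such that V has a basis v_0, …, v_{D−1} with x v_i = v_{i+1} for 0 ≤ i ≤ D−2, x v_{D−1} = 0, y v_i = μ_i v_{i−1} for 1 ≤ i ≤ D−1, y v_0 = 0, and s v_i = ε^{m−i} v_i for 0 ≤ i ≤ D−1, where μ_i = i·1_k − Σ_{l=0}^{i−1} Σ_{j=1}^{r−1} c_j ε^{(m−l)j}; in particular μ_D = 0 and μ_i ≠ 0 for 1 ≤ i ≤ D−1. -/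
open scoped BigOperators

noncomputable section

universe u

/-- The defining relations of the rank-1 rational Cherednik algebra `H_t`:
`s ^ r = 1`, `s x = ε⁻¹ x s`, `s y = ε y s`, `y x - x y = t - ∑_{j=1}^{r-1} c_j s^j`. -/
inductive CherednikRel (k : Type u) [Field k] (r : ℕ) (ε t : k) (c : ℕ → k) :
    FreeAlgebra k (Fin 3) → FreeAlgebra k (Fin 3) → Prop
  | spow : CherednikRel k r ε t c (FreeAlgebra.ι k (2 : Fin 3) ^ r) 1
  | sx : CherednikRel k r ε t c
      (FreeAlgebra.ι k (2 : Fin 3) * FreeAlgebra.ι k (0 : Fin 3))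
      (ε⁻¹ • (FreeAlgebra.ι k (0 : Fin 3) * FreeAlgebra.ι k (2 : Fin 3)))
  | sy : CherednikRel k r ε t c
      (FreeAlgebra.ι k (2 : Fin 3) * FreeAlgebra.ι k (1 : Fin 3))
      (ε • (FreeAlgebra.ι k (1 : Fin 3) * FreeAlgebra.ι k (2 : Fin 3)))
  | yx : CherednikRel k r ε t c
      (FreeAlgebra.ι k (1 : Fin 3) * FreeAlgebra.ι k (0 : Fin 3) -
        FreeAlgebra.ι k (0 : Fin 3) * FreeAlgebra.ι k (1 : Fin 3))
      (algebraMap k (FreeAlgebra k (Fin 3)) t -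
        ∑ j ∈ Finset.Icc 1 (r - 1), c j • FreeAlgebra.ι k (2 : Fin 3) ^ j)

/-- The rank-1 rational Cherednik algebra `H_t` over `k`, with parameters
`r`, primitive root `ε`, `t`, and `c`. -/
abbrev Cherednik (k : Type u) [Field k] (r : ℕ) (ε t : k) (c : ℕ → k) : Type u :=
  RingQuot (CherednikRel k r ε t c)

/-- The generator `x` of `H_t`. -/
def Hx (k : Type u) [Field k] (r : ℕ) (ε t : k) (c : ℕ → k) : Cherednik k r ε t c :=
  RingQuot.mkAlgHom k (CherednikRel k r ε t c) (FreeAlgebra.ι k (0 : Fin 3))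

/-- The generator `y` of `H_t`. -/
def Hy (k : Type u) [Field k] (r : ℕ) (ε t : k) (c : ℕ → k) : Cherednik k r ε t c :=
  RingQuot.mkAlgHom k (CherednikRel k r ε t c) (FreeAlgebra.ι k (1 : Fin 3))

/-- The generator `s` of `H_t`. -/
def Hs (k : Type u) [Field k] (r : ℕ) (ε t : k) (c : ℕ → k) : Cherednik k r ε t c :=
  RingQuot.mkAlgHom k (CherednikRel k r ε t c) (FreeAlgebra.ι k (2 : Fin 3))

/-- The element `h = x y - ∑_{j=1}^{r-1} c_j (1 - ε^{-j})⁻¹ s^j` of `H_t`. -/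
def Hh (k : Type u) [Field k] (r : ℕ) (ε t : k) (c : ℕ → k) : Cherednik k r ε t c :=
  Hx k r ε t c * Hy k r ε t c -
    ∑ j ∈ Finset.Icc 1 (r - 1), (c j * (1 - (ε ^ j)⁻¹)⁻¹) • Hs k r ε t c ^ j

section Rels
variable (k : Type u) [Field k] (r : ℕ) (ε t : k) (c : ℕ → k)

lemma rel_spow : (Hs k r ε t c) ^ r = 1 := by
  have h := RingQuot.mkAlgHom_rel k (CherednikRel.spow (k := k) (r := r) (ε := ε) (t := t) (c := c))
  simpa [Hs, map_pow, map_one] using h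

lemma rel_sx : Hs k r ε t c * Hx k r ε t c = ε⁻¹ • (Hx k r ε t c * Hs k r ε t c) := by
  have h := RingQuot.mkAlgHom_rel k (CherednikRel.sx (k := k) (r := r) (ε := ε) (t := t) (c := c))
  simpa [Hs, Hx, map_mul, map_smul] using h

lemma rel_sy : Hs k r ε t c * Hy k r ε t c = ε • (Hy k r ε t c * Hs k r ε t c) := by
  have h := RingQuot.mkAlgHom_rel k (CherednikRel.sy (k := k) (r := r) (ε := ε) (t := t) (c := c))
  simpa [Hs, Hy, map_mul, map_smul] using h

lemma rel_yx : Hy k r ε t c * Hx k r ε t c - Hx k r ε t c * Hy k r ε t c =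
    algebraMap k _ t - ∑ j ∈ Finset.Icc 1 (r - 1), c j • Hs k r ε t c ^ j := by
  have h := RingQuot.mkAlgHom_rel k (CherednikRel.yx (k := k) (r := r) (ε := ε) (t := t) (c := c))
  simpa [Hs, Hx, Hy, map_mul, map_sub, map_sum, map_smul, map_pow, AlgHom.commutes] using h

lemma mem_adjoin_gens (a : Cherednik k r ε t c) :
    a ∈ Algebra.adjoin k ({Hx k r ε t c, Hy k r ε t c, Hs k r ε t c} : Set (Cherednik k r ε t c)) := by
  obtain ⟨b, rfl⟩ := RingQuot.mkAlgHom_surjective k (CherednikRel k r ε t c) a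
  induction b with
  | grade0 a => rw [AlgHom.commutes]; exact Subalgebra.algebraMap_mem _ _
  | grade1 i =>
      fin_cases i
      · exact Algebra.subset_adjoin (by left; rfl)
      · exact Algebra.subset_adjoin (by right; left; rfl)
      · exact Algebra.subset_adjoin (by right; right; rfl)
  | mul a b ha hb => rw [map_mul]; exact Subalgebra.mul_mem _ ha hb
  | add a b ha hb => rw [map_add]; exact Subalgebra.add_mem _ ha hb

end Rels

section Derived
variable (k : Type u) [Field k] (r : ℕ) (ε t : k) (c : ℕ → k)

lemma rel_sxpow (n : ℕ) :
    Hs k r ε t c * Hx k r ε t c ^ n = (ε⁻¹) ^ n • (Hx k r ε t c ^ n * Hs k r ε t c) := by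
  induction n with
  | zero => simp
  | succ n ih =>
      rw [pow_succ, ← mul_assoc, ih, smul_mul_assoc, mul_assoc, rel_sx, mul_smul_comm,
        smul_smul, ← mul_assoc, ← pow_succ, ← pow_succ]

lemma rel_ys (hε0 : ε ≠ 0) :
    Hy k r ε t c * Hs k r ε t c = ε⁻¹ • (Hs k r ε t c * Hy k r ε t c) := by
  rw [rel_sy, smul_smul, inv_mul_cancel₀ hε0, one_smul]

lemma rel_yspow (hε0 : ε ≠ 0) (n : ℕ) :
    Hy k r ε t c * Hs k r ε t c ^ n = (ε⁻¹) ^ n • (Hs k r ε t c ^ n * Hy k r ε t c) := by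
  induction n with
  | zero => simp
  | succ n ih =>
      rw [pow_succ, ← mul_assoc, ih, smul_mul_assoc, mul_assoc, rel_ys k r ε t c hε0,
        mul_smul_comm, smul_smul, ← mul_assoc, ← pow_succ, ← pow_succ]

end Derived


/-- Proposition 2.6 (classification part): a simple `H`-module `V` on which `x^{pr}` and
`y^{pr}` act as zero has, for some `m ∈ ℤ/rℤ` and some `0 < D ≤ pr`, a basis
`v_0, …, v_{D-1}` with the explicit action of `x`, `y`, `s`, where
`μ_i = i - ∑_{l=0}^{i-1} ∑_{j=1}^{r-1} c_j ε^{(m-l)j}`; in particular `μ_D = 0` and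
`μ_i ≠ 0` for `1 ≤ i ≤ D-1`. -/
theorem stmt4 (k : Type u) [Field k] (p : ℕ) (hp : p.Prime) [CharP k p]
    (r : ℕ) (hr : 1 ≤ r) (hpr : ¬ p ∣ r) (ε : k) (hε : IsPrimitiveRoot ε r)
    (c : ℕ → k)
    (V : Type u) [AddCommGroup V] [Module (Cherednik k r ε 1 c) V]
    [Module k V] [IsScalarTower k (Cherednik k r ε 1 c) V]
    (hV : IsSimpleModule (Cherednik k r ε 1 c) V)
    (hx0 : ∀ v : V, (Hx k r ε 1 c) ^ (p * r) • v = 0)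
    (hy0 : ∀ v : V, (Hy k r ε 1 c) ^ (p * r) • v = 0) :
    ∃ (m : ZMod r) (D : ℕ) (hD : 0 < D), D ≤ p * r ∧
      ∃ (μ : ℕ → k) (bas : Module.Basis (Fin D) k V),
        (∀ i : ℕ, μ i = (i : k) -
          ∑ l ∈ Finset.range i, ∑ j ∈ Finset.Icc 1 (r - 1),
            c j * ε ^ ((m - (l : ZMod r)).val * j)) ∧
        (∀ i : ℕ, ∀ h : i + 1 < D,
          Hx k r ε 1 c • bas ⟨i, Nat.lt_of_succ_lt h⟩ = bas ⟨i + 1, h⟩) ∧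
        Hx k r ε 1 c • bas ⟨D - 1, Nat.sub_lt hD one_pos⟩ = 0 ∧
        (∀ i : ℕ, ∀ h : i + 1 < D,
          Hy k r ε 1 c • bas ⟨i + 1, h⟩ = μ (i + 1) • bas ⟨i, Nat.lt_of_succ_lt h⟩) ∧
        Hy k r ε 1 c • bas ⟨0, hD⟩ = 0 ∧
        (∀ i : Fin D, Hs k r ε 1 c • bas i =
          ε ^ ((m - ((i : ℕ) : ZMod r)).val) • bas i) ∧
        μ D = 0 ∧
        (∀ i : ℕ, 1 ≤ i → i < D → μ i ≠ 0) := by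
  classical
  haveI : NeZero r := ⟨by omega⟩
  haveI := hV
  set A := Cherednik k r ε 1 c with hA
  set X := Hx k r ε 1 c with hXdef
  set Y := Hy k r ε 1 c with hYdef
  set S := Hs k r ε 1 c with hSdef
  have hε0 : ε ≠ 0 := hε.ne_zero (by omega)
  have hrk : (r : k) ≠ 0 := fun h => hpr ((CharP.cast_eq_zero_iff k p r).1 h)
  -- scalar commutation
  have hsc : ∀ (a : A) (d : k) (w : V), a • (d • w) = d • (a • w) := by
    intro a d w
    rw [← algebraMap_smul A d w, ← mul_smul, ← Algebra.commutes, mul_smul, algebraMap_smul]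
  -- ε-power arithmetic mod r
  have hmod : ∀ x : ℕ, ε ^ (x % r) = ε ^ x := by
    intro x; conv_rhs => rw [← Nat.div_add_mod x r]
    rw [pow_add, pow_mul, hε.pow_eq_one, one_pow, one_mul]
  have hnat : ∀ x : ℕ, ε ^ ((x : ZMod r)).val = ε ^ x := by
    intro x; rw [ZMod.val_natCast, hmod]
  have hsubval : ∀ (a : ZMod r) (n : ℕ), ε ^ ((a - (n : ZMod r)).val) * ε ^ n = ε ^ a.val := by
    intro a n
    rw [← hnat n, ← pow_add, ← hmod ((a - n).val + (n : ZMod r).val), ← ZMod.val_add,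
      sub_add_cancel]
  -- a nonzero vector killed by Y
  obtain ⟨v1, hv1⟩ : ∃ v1 : V, v1 ≠ 0 := by
    haveI := IsSimpleModule.nontrivial A V
    exact exists_ne 0
  have hexy : ∃ n, Y ^ n • v1 = 0 := ⟨p * r, hy0 v1⟩
  set n0 := Nat.find hexy with hn0
  have hn0pos : 0 < n0 := by
    rcases Nat.eq_zero_or_pos n0 with h | h
    · exfalso; have := Nat.find_spec hexy; rw [← hn0, h] at this; simp at this
      exact hv1 this
    · exact h
  set w := Y ^ (n0 - 1) • v1 with hwdef
  have hw0 : w ≠ 0 := Nat.find_min hexy (by omega)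
  have hYw : Y • w = 0 := by
    rw [hwdef, ← mul_smul, ← pow_succ']
    have : n0 - 1 + 1 = n0 := by omega
    rw [this]; exact Nat.find_spec hexy
  -- averaging: an S-eigenvector in the kernel of Y
  set u : ℕ → V := fun i2 => ∑ l ∈ Finset.range r, ((ε⁻¹) ^ i2) ^ l • ((S ^ l : A) • w)
    with hudef
  have hSr : (S : A) ^ r = 1 := rel_spow k r ε 1 c
  have hSrw : ∀ z : V, (S ^ r : A) • z = z := by intro z; rw [hSr, one_smul]
  have hεinvr : ((ε⁻¹ : k)) ^ r = 1 := by rw [inv_pow, hε.pow_eq_one, inv_one]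
  have husum : ∑ i2 ∈ Finset.range r, u i2 = (r : k) • w := by
    have hco : ∀ i2 l : ℕ, ((ε⁻¹ : k) ^ i2) ^ l = ((ε⁻¹) ^ l) ^ i2 := by
      intro i2 l; rw [← pow_mul, ← pow_mul, mul_comm]
    have step : ∀ l ∈ Finset.range r,
        (∑ i2 ∈ Finset.range r, ((ε⁻¹ : k) ^ i2) ^ l • ((S ^ l : A) • w))
          = if l = 0 then (r : k) • w else 0 := by
      intro l hl
      simp only [hco]
      rw [← Finset.sum_smul]
      rcases eq_or_ne l 0 with h | h
      · subst h
        simp [Finset.sum_const, Finset.card_range]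
      · rw [if_neg h]
        have hz1 : ((ε⁻¹ : k)) ^ l ≠ 1 := by
          have h5 : ε ^ l ≠ 1 :=
            hε.pow_ne_one_of_pos_of_lt h (Finset.mem_range.1 hl)
          rw [inv_pow]
          exact fun hcon => h5 (by rw [← inv_inv (ε ^ l), hcon, inv_one])
        have hzr : (((ε⁻¹ : k)) ^ l) ^ r = 1 := by
          rw [← pow_mul, mul_comm, pow_mul, hεinvr, one_pow]
        have hsum0 : (∑ i2 ∈ Finset.range r, ((ε⁻¹ : k) ^ l) ^ i2) = 0 := by
          have hg := geom_sum_mul ((ε⁻¹ : k) ^ l) r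
          rw [hzr, sub_self] at hg
          rcases mul_eq_zero.mp hg with h' | h'
          · exact h'
          · exact absurd (sub_eq_zero.mp h') hz1
        rw [hsum0, zero_smul]
    calc ∑ i2 ∈ Finset.range r, u i2
        = ∑ l ∈ Finset.range r, ∑ i2 ∈ Finset.range r,
            ((ε⁻¹ : k) ^ i2) ^ l • ((S ^ l : A) • w) := Finset.sum_comm
      _ = ∑ l ∈ Finset.range r, (if l = 0 then (r : k) • w else 0) :=
          Finset.sum_congr rfl step
      _ = (r : k) • w := by
          rw [Finset.sum_ite_eq' (Finset.range r) 0 (fun _ => (r : k) • w),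
            if_pos (Finset.mem_range.mpr (by omega))]
  have hcan : ∀ i2 : ℕ, ε ^ i2 * (ε⁻¹ : k) ^ i2 = 1 := by
    intro i2; rw [inv_pow, mul_inv_cancel₀ (pow_ne_zero _ hε0)]
  have hSu : ∀ i2, S • u i2 = ε ^ i2 • u i2 := by
    intro i2
    have h1 : ∀ l : ℕ, S • (((ε⁻¹ : k) ^ i2) ^ l • ((S ^ l : A) • w))
        = ε ^ i2 • (((ε⁻¹ : k) ^ i2) ^ (l + 1) • ((S ^ (l + 1) : A) • w)) := by
      intro l
      rw [hsc, ← mul_smul, ← pow_succ', smul_smul, smul_smul]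
      congr 1
      rw [pow_succ, mul_comm (((ε⁻¹ : k) ^ i2) ^ l) ((ε⁻¹ : k) ^ i2), ← mul_assoc,
        hcan i2, one_mul]
    have e3 : ((ε⁻¹ : k) ^ i2) ^ r • ((S ^ r : A) • w)
        = ((ε⁻¹ : k) ^ i2) ^ 0 • ((S ^ 0 : A) • w) := by
      rw [hSrw, ← pow_mul, mul_comm, pow_mul, hεinvr, one_pow]
      simp
    have hg : (∑ l ∈ Finset.range r, ((ε⁻¹ : k) ^ i2) ^ (l + 1) • ((S ^ (l + 1) : A) • w))
        = u i2 := by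
      have e1 := Finset.sum_range_succ' (fun l => ((ε⁻¹ : k) ^ i2) ^ l • ((S ^ l : A) • w)) r
      have e2 := Finset.sum_range_succ (fun l => ((ε⁻¹ : k) ^ i2) ^ l • ((S ^ l : A) • w)) r
      have e4 := e1.symm.trans e2
      rw [e3] at e4
      have := add_right_cancel e4
      rw [this, hudef]
    calc S • u i2 = ∑ l ∈ Finset.range r,
          S • (((ε⁻¹ : k) ^ i2) ^ l • ((S ^ l : A) • w)) := by
          rw [hudef]; exact Finset.smul_sum
      _ = ∑ l ∈ Finset.range r,
          ε ^ i2 • (((ε⁻¹ : k) ^ i2) ^ (l + 1) • ((S ^ (l + 1) : A) • w)) :=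
          Finset.sum_congr rfl fun l _ => h1 l
      _ = ε ^ i2 • ∑ l ∈ Finset.range r,
          ((ε⁻¹ : k) ^ i2) ^ (l + 1) • ((S ^ (l + 1) : A) • w) := Finset.smul_sum.symm
      _ = ε ^ i2 • u i2 := by rw [hg]
  have hYu : ∀ i2, Y • u i2 = 0 := by
    intro i2
    rw [hudef]
    simp only []
    rw [Finset.smul_sum]
    apply Finset.sum_eq_zero
    intro l _
    rw [hsc, ← mul_smul, rel_yspow k r ε 1 c hε0 l, smul_assoc, mul_smul, hYw, smul_zero,
      smul_zero, smul_zero]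
  obtain ⟨i0, hi0r, hui0'⟩ : ∃ i0, i0 < r ∧ u i0 ≠ 0 := by
    by_contra h
    push_neg at h
    have h0 : ∑ i2 ∈ Finset.range r, u i2 = 0 :=
      Finset.sum_eq_zero fun i2 hi2 => h i2 (Finset.mem_range.1 hi2)
    rw [husum] at h0
    rcases smul_eq_zero.mp h0 with h' | h'
    · exact hrk h'
    · exact hw0 h'
  set m : ZMod r := (i0 : ZMod r) with hmdef
  set v0 := u i0 with hv0def
  have hui0 : v0 ≠ 0 := hui0'
  set v : ℕ → V := fun nn => (X ^ nn : A) • v0 with hvdef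
  have hv00 : v 0 = v0 := by rw [hvdef]; simp
  have hxv : ∀ nn, X • v nn = v (nn + 1) := by
    intro nn; rw [hvdef]; simp only []
    rw [← mul_smul, ← pow_succ']
  have hXt : ∀ (s2 nn : ℕ), (X ^ s2 : A) • v nn = v (nn + s2) := by
    intro s2 nn; rw [hvdef]; simp only []
    rw [← mul_smul, ← pow_add, Nat.add_comm]
  -- S-eigenvalues
  have hstep : ∀ nn : ℕ, ε ^ ((m - ((nn + 1 : ℕ) : ZMod r)).val)
      = ε⁻¹ * ε ^ ((m - (nn : ZMod r)).val) := by
    intro nn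
    have h4 : (ε⁻¹ * ε ^ ((m - (nn : ZMod r)).val)) * ε ^ (nn + 1)
        = ε ^ ((m - ((nn + 1 : ℕ) : ZMod r)).val) * ε ^ (nn + 1) := by
      rw [hsubval m (nn + 1), pow_succ]
      calc (ε⁻¹ * ε ^ ((m - (nn : ZMod r)).val)) * (ε ^ nn * ε)
          = (ε ^ ((m - (nn : ZMod r)).val) * ε ^ nn) * (ε⁻¹ * ε) := by ring
        _ = ε ^ m.val := by rw [hsubval m nn, inv_mul_cancel₀ hε0, mul_one]
    exact (mul_right_cancel₀ (pow_ne_zero (nn + 1) hε0) h4).symm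
  have hSv : ∀ nn, S • v nn = ε ^ ((m - (nn : ZMod r)).val) • v nn := by
    intro nn
    induction nn with
    | zero =>
        have h0 : S • v 0 = ε ^ i0 • v 0 := by rw [hv00]; exact hSu i0
        rw [h0]
        congr 1
        rw [Nat.cast_zero, sub_zero, hmdef, hnat i0]
    | succ nn ih =>
        rw [← hxv nn, ← mul_smul,
          show (S * X : A) = ε⁻¹ • (X * S) from rel_sx k r ε 1 c,
          smul_assoc, mul_smul, ih, hsc, hxv, smul_smul, hstep nn]
  have hSjv : ∀ (j nn : ℕ), (S ^ j : A) • v nn = ε ^ ((m - (nn : ZMod r)).val * j) • v nn := by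
    intro j nn
    induction j with
    | zero => simp
    | succ j ih =>
        rw [pow_succ', mul_smul, ih, hsc, hSv, smul_smul, ← pow_add, ← Nat.mul_succ]
  -- the scalars μ
  set μ : ℕ → k := fun i2 => (i2 : k) -
      ∑ l ∈ Finset.range i2, ∑ j ∈ Finset.Icc 1 (r - 1),
        c j * ε ^ ((m - (l : ZMod r)).val * j) with hμdef
  have hμrec : ∀ nn, μ (nn + 1) = μ nn + (1 - ∑ j ∈ Finset.Icc 1 (r - 1),
      c j * ε ^ ((m - (nn : ZMod r)).val * j)) := by
    intro nn
    rw [hμdef]; simp only []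
    rw [Finset.sum_range_succ]
    push_cast
    ring
  have hμ0 : μ 0 = 0 := by rw [hμdef]; simp
  have hYv0 : Y • v 0 = 0 := by rw [hv00, hv0def]; exact hYu i0
  have hYX : (Y * X : A) = X * Y + (1 - ∑ j ∈ Finset.Icc 1 (r - 1), c j • (S ^ j : A)) := by
    have h := rel_yx k r ε 1 c
    rw [map_one] at h
    rw [hXdef, hYdef, hSdef]
    exact sub_eq_iff_eq_add'.mp h
  have hkey : ∀ nn, Y • v (nn + 1) = X • (Y • v nn) + v nn -
      (∑ j ∈ Finset.Icc 1 (r - 1), c j * ε ^ ((m - (nn : ZMod r)).val * j)) • v nn := by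
    intro nn
    rw [← hxv nn, ← mul_smul, hYX, add_smul, mul_smul, sub_smul, one_smul]
    have hsum2 : ((∑ j ∈ Finset.Icc 1 (r - 1), c j • (S ^ j : A))) • v nn
        = (∑ j ∈ Finset.Icc 1 (r - 1), c j * ε ^ ((m - (nn : ZMod r)).val * j)) • v nn := by
      rw [Finset.sum_smul, Finset.sum_smul]
      refine Finset.sum_congr rfl fun j hj => ?_
      rw [smul_assoc, hSjv j nn, smul_smul]
    rw [hsum2, add_sub_assoc]
  have hcomb : ∀ (a b : k) (z : V), a • z + z - b • z = (a + (1 - b)) • z := by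
    intro a b z
    rw [add_smul, sub_smul, one_smul]
    abel
  have hYv : ∀ nn, Y • v (nn + 1) = μ (nn + 1) • v nn := by
    intro nn
    induction nn with
    | zero =>
        rw [hkey 0, hYv0, smul_zero, zero_add, hμrec 0, hμ0, zero_add, sub_smul, one_smul k]
    | succ nn ih =>
        rw [hkey (nn + 1), ih, hsc, hxv, hcomb, hμrec (nn + 1)]
  -- D
  have hexx : ∃ nn, v nn = 0 := ⟨p * r, by rw [hvdef]; exact hx0 v0⟩
  set D := Nat.find hexx with hDdef
  have hvD : v D = 0 := Nat.find_spec hexx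
  have hvne : ∀ nn, nn < D → v nn ≠ 0 := fun nn h => Nat.find_min hexx h
  have hDpos : 0 < D := by
    rcases Nat.eq_zero_or_pos D with h | h
    · exfalso
      apply hui0
      rw [← hv00]
      have h2 := hvD
      rw [h] at h2
      exact h2
    · exact h
  have hDle : D ≤ p * r := Nat.find_le (by rw [hvdef]; exact hx0 v0)
  have hvge : ∀ nn, D ≤ nn → v nn = 0 := by
    intro nn h
    have : v nn = (X ^ (nn - D) : A) • v D := by rw [hXt, Nat.add_sub_cancel' h]
    rw [this, hvD, smul_zero]
  have hμD : μ D = 0 := by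
    have h1 : Y • v D = μ D • v (D - 1) := by
      have e : D - 1 + 1 = D := by omega
      rw [← e]; exact hYv (D - 1)
    rw [hvD, smul_zero] at h1
    rcases smul_eq_zero.mp h1.symm with h | h
    · exact h
    · exact absurd h (hvne (D - 1) (by omega))
  -- linear independence
  have hLI : LinearIndependent k (fun j : Fin D => v j) := by
    rw [Fintype.linearIndependent_iff]
    intro g hg
    suffices hcl : ∀ j : ℕ, ∀ hj : j < D, g ⟨j, hj⟩ = 0 by
      intro i2; obtain ⟨j, hj⟩ := i2; exact hcl j hj
    intro j
    induction j using Nat.strong_induction_on with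
    | _ j ih =>
      intro hj
      have happ : (X ^ (D - 1 - j) : A) • (∑ i2 : Fin D, g i2 • v i2) = 0 := by
        rw [hg, smul_zero]
      rw [Finset.smul_sum] at happ
      have hterm : ∀ i2 : Fin D,
          (X ^ (D - 1 - j) : A) • (g i2 • v i2) = g i2 • v ((i2 : ℕ) + (D - 1 - j)) := by
        intro i2; rw [hsc, hXt]
      rw [Finset.sum_congr rfl (fun i2 _ => hterm i2)] at happ
      have hsingle : ∑ i2 : Fin D, g i2 • v ((i2 : ℕ) + (D - 1 - j))
          = g ⟨j, hj⟩ • v (D - 1) := by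
        rw [Finset.sum_eq_single_of_mem (⟨j, hj⟩ : Fin D) (Finset.mem_univ _) ?_]
        · have e : ((⟨j, hj⟩ : Fin D) : ℕ) + (D - 1 - j) = D - 1 := by
            show j + (D - 1 - j) = D - 1
            omega
          rw [e]
        · intro i2 _ hne
          rcases Nat.lt_or_ge (i2 : ℕ) j with hlt | hge
          · have : g i2 = 0 := by
              have := ih (i2 : ℕ) hlt i2.isLt
              simpa using this
            rw [this, zero_smul]
          · have hgt : j < (i2 : ℕ) := by
              rcases Nat.eq_or_lt_of_le hge with he | hl
              · exact absurd (Fin.ext he.symm) hne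
              · exact hl
            rw [hvge _ (by omega), smul_zero]
      rw [hsingle] at happ
      rcases smul_eq_zero.mp happ with h | h
      · exact h
      · exact absurd h (hvne (D - 1) (by omega))
  -- stability under the algebra
  have hstab : ∀ (W : Submodule k V), (∀ x2 ∈ W, X • x2 ∈ W) → (∀ x2 ∈ W, Y • x2 ∈ W) →
      (∀ x2 ∈ W, S • x2 ∈ W) → ∀ (a : A), ∀ x2 ∈ W, a • x2 ∈ W := by
    intro W hXW hYW hSW a
    have hmem := mem_adjoin_gens k r ε 1 c a
    induction hmem using Algebra.adjoin_induction with
    | mem z hz =>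
        simp only [Set.mem_insert_iff, Set.mem_singleton_iff] at hz
        rcases hz with rfl | rfl | rfl
        · exact hXW
        · exact hYW
        · exact hSW
    | algebraMap d =>
        intro x2 hx2
        rw [algebraMap_smul]
        exact W.smul_mem d hx2
    | add a b ha hb iha ihb =>
        intro x2 hx2
        rw [add_smul]
        exact W.add_mem (iha x2 hx2) (ihb x2 hx2)
    | mul a b ha hb iha ihb =>
        intro x2 hx2
        rw [mul_smul]
        exact iha _ (ihb x2 hx2)
  have hsmul_span : ∀ (a : A) (T : Set V), (∀ x2 ∈ T, a • x2 ∈ Submodule.span k T) →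
      ∀ x2 ∈ Submodule.span k T, a • x2 ∈ Submodule.span k T := by
    intro a T hT x2 hx2
    induction hx2 using Submodule.span_induction with
    | mem z hz => exact hT z hz
    | zero => rw [smul_zero]; exact Submodule.zero_mem _
    | add y z hy hz hy' hz' => rw [smul_add]; exact Submodule.add_mem _ hy' hz'
    | smul d z hz hz' => rw [hsc]; exact Submodule.smul_mem _ d hz'
  -- spanning
  have hspan : ⊤ ≤ Submodule.span k (Set.range fun j : Fin D => v j) := by
    set T : Set V := Set.range fun j : Fin D => v j with hT
    have hXT : ∀ x2 ∈ Submodule.span k T, X • x2 ∈ Submodule.span k T := by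
      apply hsmul_span
      rintro _ ⟨j, rfl⟩
      simp only []
      rw [hxv]
      by_cases hcase : (j : ℕ) + 1 < D
      · exact Submodule.subset_span ⟨⟨(j : ℕ) + 1, hcase⟩, rfl⟩
      · rw [hvge _ (by omega)]; exact Submodule.zero_mem _
    have hYT : ∀ x2 ∈ Submodule.span k T, Y • x2 ∈ Submodule.span k T := by
      apply hsmul_span
      rintro _ ⟨j, rfl⟩
      simp only []
      rcases Nat.eq_zero_or_pos (j : ℕ) with hj0 | hjpos
      · rw [hj0, hYv0]; exact Submodule.zero_mem _
      · have e : (j : ℕ) = ((j : ℕ) - 1) + 1 := by omega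
        rw [e, hYv]
        exact Submodule.smul_mem _ _
          (Submodule.subset_span ⟨⟨(j : ℕ) - 1, by omega⟩, rfl⟩)
    have hST : ∀ x2 ∈ Submodule.span k T, S • x2 ∈ Submodule.span k T := by
      apply hsmul_span
      rintro _ ⟨j, rfl⟩
      simp only []
      rw [hSv]
      exact Submodule.smul_mem _ _ (Submodule.subset_span ⟨j, rfl⟩)
    have htop : Submodule.span A {v0} = ⊤ := by
      rcases eq_bot_or_eq_top (Submodule.span A {v0}) with h | h
      · exfalso
        apply hui0
        have hm : v0 ∈ Submodule.span A {v0} := Submodule.mem_span_singleton_self v0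
        rw [h] at hm
        simpa using hm
      · exact h
    intro z _
    have hz : z ∈ Submodule.span A {v0} := by rw [htop]; trivial
    obtain ⟨a, rfl⟩ := Submodule.mem_span_singleton.mp hz
    exact hstab _ hXT hYT hST a v0 (Submodule.subset_span ⟨⟨0, hDpos⟩, hv00⟩)
  set bas : Module.Basis (Fin D) k V := Module.Basis.mk hLI hspan with hbasdef
  have hbas : ∀ j : Fin D, bas j = v j := fun j => Module.Basis.mk_apply hLI hspan j
  -- μ i ≠ 0 for 1 ≤ i < D
  have hμne : ∀ i2 : ℕ, 1 ≤ i2 → i2 < D → μ i2 ≠ 0 := by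
    intro i2 h1 h2 hzero
    set T' : Set V := Set.range fun j : Fin (D - i2) => v (i2 + (j : ℕ)) with hT'
    have hXT' : ∀ x2 ∈ Submodule.span k T', X • x2 ∈ Submodule.span k T' := by
      apply hsmul_span
      rintro _ ⟨j, rfl⟩
      simp only []
      rw [hxv]
      by_cases hcase : i2 + (j : ℕ) + 1 < D
      · exact Submodule.subset_span ⟨⟨(j : ℕ) + 1, by omega⟩, congrArg v (by show i2 + ((j : ℕ) + 1) = i2 + (j : ℕ) + 1; omega)⟩
      · rw [hvge _ (by omega)]; exact Submodule.zero_mem _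
    have hYT' : ∀ x2 ∈ Submodule.span k T', Y • x2 ∈ Submodule.span k T' := by
      apply hsmul_span
      rintro _ ⟨j, rfl⟩
      simp only []
      rcases Nat.eq_zero_or_pos (j : ℕ) with hj0 | hjpos
      · rw [hj0, Nat.add_zero]
        have e : i2 = (i2 - 1) + 1 := by omega
        rw [e, hYv, ← e, hzero, zero_smul]
        exact Submodule.zero_mem _
      · have e : i2 + (j : ℕ) = (i2 + (j : ℕ) - 1) + 1 := by omega
        rw [e, hYv]
        refine Submodule.smul_mem _ _ (Submodule.subset_span
          ⟨⟨(j : ℕ) - 1, by have := j.isLt; omega⟩, congrArg v (by show i2 + ((j : ℕ) - 1) = i2 + (j : ℕ) - 1; omega)⟩)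
    have hST' : ∀ x2 ∈ Submodule.span k T', S • x2 ∈ Submodule.span k T' := by
      apply hsmul_span
      rintro _ ⟨j, rfl⟩
      simp only []
      rw [hSv]
      exact Submodule.smul_mem _ _ (Submodule.subset_span ⟨j, rfl⟩)
    set W'' : Submodule A V :=
      { carrier := (Submodule.span k T' : Set V)
        add_mem' := fun ha hb => (Submodule.span k T').add_mem ha hb
        zero_mem' := (Submodule.span k T').zero_mem
        smul_mem' := fun a {x2} hx2 => hstab (Submodule.span k T') hXT' hYT' hST' a x2 hx2 }
      with hW''
    have hmemi2 : v i2 ∈ Submodule.span k T' :=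
      Submodule.subset_span ⟨⟨0, by omega⟩, congrArg v (by show i2 + 0 = i2; omega)⟩
    rcases eq_bot_or_eq_top W'' with h | h
    · have : v i2 ∈ W'' := hmemi2
      rw [h] at this
      exact hvne i2 h2 (by simpa using this)
    · have h0 : v 0 ∈ W'' := by rw [h]; trivial
      have h0' : v 0 ∈ Submodule.span k T' := h0
      have himg : Submodule.span k T' ≤
          Submodule.span k ((fun j : Fin D => v j) '' {j : Fin D | (j : ℕ) ≠ 0}) := by
        apply Submodule.span_le.mpr
        rintro _ ⟨j, rfl⟩
        simp only []
        apply Submodule.subset_span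
        refine ⟨⟨i2 + (j : ℕ), by have := j.isLt; omega⟩, ?_, rfl⟩
        show i2 + (j : ℕ) ≠ 0
        omega
      have hnm := hLI.notMem_span_image
        (s := {j : Fin D | (j : ℕ) ≠ 0}) (x := (⟨0, hDpos⟩ : Fin D)) (by simp)
      exact hnm (himg h0')
  refine ⟨m, D, hDpos, hDle, μ, bas, fun i2 => rfl, ?_, ?_, ?_, ?_, ?_, hμD, hμne⟩
  · intro i2 h; rw [hbas, hbas]; exact hxv i2
  · rw [hbas]
    have e : (D - 1) + 1 = D := by omega
    rw [hxv (D - 1), e, hvD]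
  · intro i2 h; rw [hbas, hbas]; exact hYv i2
  · rw [hbas]; exact hYv0
  · intro i2; rw [hbas]; exact hSv i2
end
end

section
/- Let V be a simple H'-module on which x^r and y^r do not both act as zero, say x^r acts by a ∈ k, y^r acts by b ∈ k, and h acts by β ∈ k. Then dim_k V = r, the relation ab = ∏_{m=0}^{r−1} (β + Σ_{j=1}^{r−1} c_j (1−ε^{−j})^{−1} ε^{mj}) holds, and if a ≠ 0 then V has a basis v_0, …, v_{r−1} in which x v_i = v_{i+1} for 0 ≤ i ≤ r−2, x v_{r−1} = a v_0, y v_i = μ_i v_{i−1} for 1 ≤ i ≤ r−1, y v_0 = a^{−1} μ_0 v_{r−1}, and s v_i = ε^{−i} v_i, where μ_i = β + Σ_{j=1}^{r−1} c_j (1−ε^{−j})^{−1} ε^{−ij}. -/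
open scoped BigOperators

noncomputable section

universe u

section Aux

variable {k : Type u} [Field k] {V : Type u} [AddCommGroup V] [Module k V]

lemma end_pow_eigen (f : Module.End k V) {θ : k} {v : V} (h : f v = θ • v) :
    ∀ j : ℕ, (f ^ j) v = θ ^ j • v := by
  intro j
  induction j with
  | zero => simp
  | succ n ih =>
    rw [pow_succ', Module.End.mul_apply, ih, map_smul, h, smul_smul, ← pow_succ]

lemma end_pow_inj {f : Module.End k V} (hf : Function.Injective f) (m : ℕ) :
    Function.Injective (f ^ m : Module.End k V) := by
  induction m with
  | zero => rw [pow_zero]; exact fun u v h => by simpa using h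
  | succ n ih =>
    intro u v h
    rw [pow_succ, Module.End.mul_apply, Module.End.mul_apply] at h
    exact hf (ih h)

lemma exists_eigen_list (f : Module.End k V) :
    ∀ (l : List k) (v : V), v ≠ 0 →
      ((l.map fun a => f - algebraMap k (Module.End k V) a).prod) v = 0 →
      ∃ a ∈ l, ∃ u : V, u ≠ 0 ∧ f u = a • u := by
  intro l
  induction l with
  | nil => intro v hv h; simp at h; exact absurd h hv
  | cons a l ih =>
    intro v hv h
    by_cases hu : ((l.map fun a => f - algebraMap k (Module.End k V) a).prod) v = 0
    · obtain ⟨b, hb, u, hu0, hub⟩ := ih v hv hu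
      exact ⟨b, List.mem_cons_of_mem _ hb, u, hu0, hub⟩
    · refine ⟨a, List.mem_cons_self, _, hu, ?_⟩
      have h2 : (f - algebraMap k (Module.End k V) a)
          (((l.map fun a => f - algebraMap k (Module.End k V) a).prod) v) = 0 := by
        rw [← Module.End.mul_apply, ← List.prod_cons]
        simpa [List.map_cons] using h
      rw [LinearMap.sub_apply, Module.algebraMap_end_apply, sub_eq_zero] at h2
      exact h2

lemma exists_eigen_of_pow_eq_one {r : ℕ} (hr : 1 ≤ r) {ε : k} (hε : IsPrimitiveRoot ε r)
    (S : Module.End k V) (hS : S ^ r = 1) {v : V} (hv : v ≠ 0) :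
    ∃ i < r, ∃ u : V, u ≠ 0 ∧ S u = ε ^ i • u := by
  classical
  have hpoly := Polynomial.X_pow_sub_one_eq_prod hr hε
  set l := (Polynomial.nthRootsFinset r (1 : k)).toList with hl
  have hlp : ((l.map fun a => Polynomial.X - Polynomial.C a).prod)
      = (Polynomial.X ^ r - 1 : Polynomial k) := by
    rw [hpoly, ← Finset.prod_map_toList]
  have key : ((l.map fun a => S - algebraMap k (Module.End k V) a).prod)
      = Polynomial.aeval S ((l.map fun a => Polynomial.X - Polynomial.C a).prod) := by
    rw [map_list_prod, List.map_map]
    congr 1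
    simp [Function.comp_def]
  have h0 : ((l.map fun a => S - algebraMap k (Module.End k V) a).prod) v = 0 := by
    rw [key, hlp]
    simp [map_sub, map_pow, hS]
  obtain ⟨a, ha, u, hu0, hu⟩ := exists_eigen_list S l v hv h0
  have ha' : a ^ r = 1 := (Polynomial.mem_nthRootsFinset hr 1).1 (Finset.mem_toList.1 ha)
  haveI : NeZero r := ⟨by omega⟩
  obtain ⟨i, hi, rfl⟩ := hε.eq_pow_of_pow_eq_one ha'
  exact ⟨i, hi, u, hu0, hu⟩

end Aux

section Ladder

variable {k : Type u} [Field k] {V : Type u} [AddCommGroup V] [Module k V]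
variable {r : ℕ} {δ : k} {X Z S : Module.End k V} {a : k} {w : V} {τ : ℕ → k}

lemma ladder_eig (hSX : S * X = δ • (X * S)) {θ : k} (hw : S w = θ • w) (m : ℕ) :
    S ((X ^ m) w) = (δ ^ m * θ) • (X ^ m) w := by
  induction m with
  | zero => simpa using hw
  | succ n ih =>
    have h1 : (X ^ (n + 1)) w = X ((X ^ n) w) := by rw [pow_succ']; rfl
    have h2 := congrFun (congrArg DFunLike.coe hSX) ((X ^ n) w)
    simp only [Module.End.mul_apply, LinearMap.smul_apply] at h2
    rw [h1, h2, ih, map_smul, smul_smul]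
    congr 1
    ring

lemma ladder_leftInv (hr : 1 ≤ r) (ha : a ≠ 0) (hXr : X ^ r = a • 1) (u : V) :
    (a⁻¹ • X ^ (r - 1)) (X u) = u := by
  have h1 : (X ^ (r - 1)) (X u) = (X ^ r) u := by
    rw [← Module.End.mul_apply, ← pow_succ, Nat.sub_add_cancel hr]
  rw [LinearMap.smul_apply, h1, hXr]
  simp [smul_smul, inv_mul_cancel₀ ha]

lemma ladder_inj (hr : 1 ≤ r) (ha : a ≠ 0) (hXr : X ^ r = a • 1) :
    Function.Injective X :=
  Function.LeftInverse.injective (g := fun u => (a⁻¹ • X ^ (r - 1)) u)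
    (ladder_leftInv hr ha hXr)

lemma ladder_Z_succ (hinj : Function.Injective X)
    (hτ : ∀ i, (X * Z) ((X ^ i) w) = τ i • (X ^ i) w) (i : ℕ) :
    Z ((X ^ (i + 1)) w) = τ (i + 1) • (X ^ i) w := by
  apply hinj
  have h1 := hτ (i + 1)
  rw [Module.End.mul_apply] at h1
  rw [h1, map_smul]
  congr 1
  rw [pow_succ']
  rfl

lemma ladder_Z_zero (hr : 1 ≤ r) (ha : a ≠ 0) (hXr : X ^ r = a • 1)
    (hτ : ∀ i, (X * Z) ((X ^ i) w) = τ i • (X ^ i) w) :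
    Z w = (a⁻¹ * τ 0) • (X ^ (r - 1)) w := by
  apply ladder_inj hr ha hXr
  have h1 := hτ 0
  simp only [pow_zero, Module.End.mul_apply, Module.End.one_apply] at h1
  rw [h1, map_smul]
  have h2 : X ((X ^ (r - 1)) w) = (X ^ r) w := by
    rw [← Module.End.mul_apply, ← pow_succ', Nat.sub_add_cancel hr]
  rw [h2, hXr, LinearMap.smul_apply, Module.End.one_apply, smul_smul]
  congr 1
  field_simp

lemma ladder_Zpow (hZ : ∀ i, Z ((X ^ (i + 1)) w) = τ (i + 1) • (X ^ i) w) (m : ℕ) :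
    (Z ^ m) ((X ^ m) w) = (∏ j ∈ Finset.Icc 1 m, τ j) • w := by
  induction m with
  | zero => simp
  | succ n ih =>
    have h1 : (Z ^ (n + 1)) ((X ^ (n + 1)) w) = (Z ^ n) (Z ((X ^ (n + 1)) w)) := by
      rw [pow_succ]
      rfl
    rw [h1, hZ n, map_smul, ih, smul_smul,
      Finset.prod_Icc_succ_top (Nat.le_add_left 1 n)]
    congr 1
    ring

end Ladder

section LadderBasis

variable {k : Type u} [Field k] {V : Type u} [AddCommGroup V] [Module k V]
variable {r : ℕ} {δ : k} {X Z S : Module.End k V} {a : k} {w : V} {τ : ℕ → k}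

lemma ladder_basis (hr : 1 ≤ r) (hδ : IsPrimitiveRoot δ r) (ha : a ≠ 0)
    (hXr : X ^ r = a • 1) (hSX : S * X = δ • (X * S))
    (hw0 : w ≠ 0) (hSw : S w = w)
    (hτ : ∀ i, (X * Z) ((X ^ i) w) = τ i • (X ^ i) w)
    (hsimple : ∀ W : Submodule k V, (∀ u ∈ W, X u ∈ W) → (∀ u ∈ W, Z u ∈ W) →
      (∀ u ∈ W, S u ∈ W) → ∀ u0 ∈ W, u0 ≠ 0 → W = ⊤) :
    ∃ bas : Module.Basis (Fin r) k V, ∀ i : Fin r, bas i = (X ^ (i : ℕ)) w := by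
  have hXinj : Function.Injective X := ladder_inj hr ha hXr
  have hvi : ∀ m : ℕ, (X ^ m) w ≠ 0 := fun m h =>
    hw0 (end_pow_inj hXinj m (by rw [map_zero]; exact h))
  have hSv : ∀ m : ℕ, S ((X ^ m) w) = δ ^ m • (X ^ m) w := by
    intro m
    have h := ladder_eig hSX (θ := (1 : k)) (by rw [one_smul]; exact hSw) m
    simpa using h
  have hinj : Function.Injective fun i : Fin r => δ ^ (i : ℕ) := by
    intro i j h
    exact Fin.ext (hδ.pow_inj i.isLt j.isLt h)
  have hli : LinearIndependent k (fun i : Fin r => (X ^ (i : ℕ)) w) :=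
    Module.End.eigenvectors_linearIndependent' S (fun i : Fin r => δ ^ (i : ℕ)) hinj _
      (fun i => Module.End.hasEigenvector_iff.2
        ⟨Module.End.mem_eigenspace_iff.2 (hSv i), hvi i⟩)
  have hmem : ∀ m : ℕ, m < r →
      (X ^ m) w ∈ Submodule.span k (Set.range fun i : Fin r => (X ^ (i : ℕ)) w) :=
    fun m hm => Submodule.subset_span ⟨⟨m, hm⟩, rfl⟩
  have hwmem : w ∈ Submodule.span k (Set.range fun i : Fin r => (X ^ (i : ℕ)) w) := by
    have h := hmem 0 (by omega)
    simpa using h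
  have hgen : ∀ f : Module.End k V,
      (∀ i : Fin r, f ((X ^ (i : ℕ)) w) ∈
        Submodule.span k (Set.range fun i : Fin r => (X ^ (i : ℕ)) w)) →
      ∀ u ∈ Submodule.span k (Set.range fun i : Fin r => (X ^ (i : ℕ)) w),
        f u ∈ Submodule.span k (Set.range fun i : Fin r => (X ^ (i : ℕ)) w) := by
    intro f hf u hu
    induction hu using Submodule.span_induction with
    | mem x hx => obtain ⟨i, rfl⟩ := hx; exact hf i
    | zero => rw [map_zero]; exact Submodule.zero_mem _
    | add x y hx hy ihx ihy => rw [map_add]; exact Submodule.add_mem _ ihx ihy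
    | smul t x hx ihx => rw [map_smul]; exact Submodule.smul_mem _ t ihx
  have hXst : ∀ u ∈ Submodule.span k (Set.range fun i : Fin r => (X ^ (i : ℕ)) w),
      X u ∈ Submodule.span k (Set.range fun i : Fin r => (X ^ (i : ℕ)) w) := by
    apply hgen
    intro i
    have h1 : X ((X ^ (i : ℕ)) w) = (X ^ ((i : ℕ) + 1)) w := by
      rw [← Module.End.mul_apply, ← pow_succ']
    rw [h1]
    by_cases hlt : (i : ℕ) + 1 < r
    · exact hmem _ hlt
    · have h2 : (i : ℕ) + 1 = r := by omega
      rw [h2, hXr]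
      simpa using Submodule.smul_mem _ a hwmem
  have hZst : ∀ u ∈ Submodule.span k (Set.range fun i : Fin r => (X ^ (i : ℕ)) w),
      Z u ∈ Submodule.span k (Set.range fun i : Fin r => (X ^ (i : ℕ)) w) := by
    apply hgen
    intro i
    rcases Nat.eq_zero_or_pos (i : ℕ) with h0 | hpos
    · rw [h0]
      have h1 : (X ^ (0 : ℕ)) w = w := by simp
      rw [h1, ladder_Z_zero hr ha hXr hτ]
      exact Submodule.smul_mem _ _ (hmem (r - 1) (by omega))
    · obtain ⟨m, hm⟩ : ∃ m, (i : ℕ) = m + 1 := ⟨(i : ℕ) - 1, by omega⟩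
      rw [hm, ladder_Z_succ hXinj hτ]
      exact Submodule.smul_mem _ _ (hmem m (by omega))
  have hSst : ∀ u ∈ Submodule.span k (Set.range fun i : Fin r => (X ^ (i : ℕ)) w),
      S u ∈ Submodule.span k (Set.range fun i : Fin r => (X ^ (i : ℕ)) w) := by
    apply hgen
    intro i
    rw [hSv]
    exact Submodule.smul_mem _ _ (hmem _ i.isLt)
  have htop := hsimple _ hXst hZst hSst w hwmem hw0
  refine ⟨Module.Basis.mk hli (le_of_eq htop.symm), ?_⟩
  intro i
  rw [Module.Basis.mk_apply]

end LadderBasis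

/-- Proposition 2.7 (classification part): a simple `H'`-module `V` on which `x^r`, `y^r`, `h`
act by scalars `a`, `b`, `β` with `a`, `b` not both zero has dimension `r`, the relation
`a b = ∏_{m=0}^{r-1} (β + ∑_j c_j (1-ε^{-j})⁻¹ ε^{mj})` holds, and if `a ≠ 0` then `V` has
the explicit basis `v_0, …, v_{r-1}`. -/
theorem stmt6 (k : Type u) [Field k] (p : ℕ) (hp : p.Prime) [CharP k p]
    (r : ℕ) (hr : 1 ≤ r) (hpr : ¬ p ∣ r) (ε : k) (hε : IsPrimitiveRoot ε r)
    (c : ℕ → k) (a b β : k) (hab : ¬ (a = 0 ∧ b = 0))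
    (V : Type u) [AddCommGroup V] [Module (Cherednik k r ε 0 c) V]
    [Module k V] [IsScalarTower k (Cherednik k r ε 0 c) V]
    (hV : IsSimpleModule (Cherednik k r ε 0 c) V)
    (hxa : ∀ v : V, (Hx k r ε 0 c) ^ r • v = a • v)
    (hyb : ∀ v : V, (Hy k r ε 0 c) ^ r • v = b • v)
    (hhβ : ∀ v : V, Hh k r ε 0 c • v = β • v) :
    Module.finrank k V = r ∧
    a * b = ∏ m ∈ Finset.range r,
      (β + ∑ j ∈ Finset.Icc 1 (r - 1), c j * (1 - (ε ^ j)⁻¹)⁻¹ * ε ^ (m * j)) ∧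
    (a ≠ 0 →
      ∃ (μ : ℕ → k) (bas : Module.Basis (Fin r) k V),
        (∀ i : ℕ, μ i = β +
          ∑ j ∈ Finset.Icc 1 (r - 1), c j * (1 - (ε ^ j)⁻¹)⁻¹ * (ε ^ (i * j))⁻¹) ∧
        (∀ i : ℕ, ∀ h : i + 1 < r,
          Hx k r ε 0 c • bas ⟨i, Nat.lt_of_succ_lt h⟩ = bas ⟨i + 1, h⟩) ∧
        Hx k r ε 0 c • bas ⟨r - 1, Nat.sub_lt hr one_pos⟩ = a • bas ⟨0, hr⟩ ∧
        (∀ i : ℕ, ∀ h : i + 1 < r,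
          Hy k r ε 0 c • bas ⟨i + 1, h⟩ = μ (i + 1) • bas ⟨i, Nat.lt_of_succ_lt h⟩) ∧
        Hy k r ε 0 c • bas ⟨0, hr⟩ = (a⁻¹ * μ 0) • bas ⟨r - 1, Nat.sub_lt hr one_pos⟩ ∧
        (∀ i : Fin r, Hs k r ε 0 c • bas i = (ε ^ (i : ℕ))⁻¹ • bas i)) := by
  classical
  let φ : Cherednik k r ε 0 c →ₐ[k] Module.End k V := Algebra.lsmul k k V
  have φapp : ∀ (z : Cherednik k r ε 0 c) (u : V), φ z u = z • u := fun _ _ => rfl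
  set Xop := φ (Hx k r ε 0 c) with hXdef
  set Yop := φ (Hy k r ε 0 c) with hYdef
  set Sop := φ (Hs k r ε 0 c) with hSdef
  -- relations in the algebra
  have rel1 : (Hs k r ε 0 c) ^ r = 1 := by
    have h := RingQuot.mkAlgHom_rel k (CherednikRel.spow (k:=k) (r:=r) (ε:=ε) (t:=0) (c:=c))
    rw [map_pow, map_one] at h
    exact h
  have rel2 : Hs k r ε 0 c * Hx k r ε 0 c = ε⁻¹ • (Hx k r ε 0 c * Hs k r ε 0 c) := by
    have h := RingQuot.mkAlgHom_rel k (CherednikRel.sx (k:=k) (r:=r) (ε:=ε) (t:=0) (c:=c))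
    rw [map_mul, map_smul, map_mul] at h
    exact h
  have rel3 : Hs k r ε 0 c * Hy k r ε 0 c = ε • (Hy k r ε 0 c * Hs k r ε 0 c) := by
    have h := RingQuot.mkAlgHom_rel k (CherednikRel.sy (k:=k) (r:=r) (ε:=ε) (t:=0) (c:=c))
    rw [map_mul, map_smul, map_mul] at h
    exact h
  have rel4 : Hy k r ε 0 c * Hx k r ε 0 c - Hx k r ε 0 c * Hy k r ε 0 c
      = - ∑ j ∈ Finset.Icc 1 (r - 1), c j • Hs k r ε 0 c ^ j := by
    have h := RingQuot.mkAlgHom_rel k (CherednikRel.yx (k:=k) (r:=r) (ε:=ε) (t:=0) (c:=c))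
    simp only [map_sub, map_mul, map_sum, map_smul, map_pow, AlgHom.commutes,
      map_zero, zero_sub, map_neg] at h
    exact h
  -- operator relations
  have oS : Sop ^ r = 1 := by rw [hSdef, ← map_pow, rel1, map_one]
  have oSX : Sop * Xop = ε⁻¹ • (Xop * Sop) := by
    rw [hSdef, hXdef, ← map_mul, rel2, map_smul, map_mul]
  have oSY : Sop * Yop = ε • (Yop * Sop) := by
    rw [hSdef, hYdef, ← map_mul, rel3, map_smul, map_mul]
  have oYX : Yop * Xop = Xop * Yop - ∑ j ∈ Finset.Icc 1 (r - 1), c j • Sop ^ j := by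
    have h := congrArg φ rel4
    rw [map_sub, map_mul, map_mul, map_neg, map_sum] at h
    simp only [map_smul, map_pow] at h
    rw [← hSdef, ← hXdef, ← hYdef] at h
    rw [sub_eq_iff_eq_add] at h
    rw [h]
    abel
  have oXr : Xop ^ r = a • (1 : Module.End k V) := by
    ext u
    rw [hXdef, ← map_pow, φapp, hxa u]
    simp
  have oYr : Yop ^ r = b • (1 : Module.End k V) := by
    ext u
    rw [hYdef, ← map_pow, φapp, hyb u]
    simp
  have oXY : Xop * Yop = β • (1 : Module.End k V)
      + ∑ j ∈ Finset.Icc 1 (r - 1), (c j * (1 - (ε ^ j)⁻¹)⁻¹) • Sop ^ j := by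
    have h : φ (Hh k r ε 0 c) = β • (1 : Module.End k V) := by
      ext u
      rw [φapp, hhβ u]
      simp
    rw [Hh, map_sub, map_mul, map_sum] at h
    simp only [map_smul, map_pow] at h
    rw [← hSdef, ← hXdef, ← hYdef] at h
    rw [sub_eq_iff_eq_add] at h
    rw [h]
  -- scalar facts
  have hεne : ε ≠ 0 := hε.ne_zero (by omega)
  have hone_sub_ne : ∀ j ∈ Finset.Icc 1 (r - 1), (1 : k) - (ε ^ j)⁻¹ ≠ 0 := by
    intro j hj
    rw [Finset.mem_Icc] at hj
    have h1 : ε ^ j ≠ 1 := hε.pow_ne_one_of_pos_of_lt (by omega) (by omega)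
    intro h
    exact h1 (inv_eq_one.mp (sub_eq_zero.mp h).symm)
  have hγc : ∀ j ∈ Finset.Icc 1 (r - 1),
      c j * (1 - (ε ^ j)⁻¹)⁻¹ * (1 - (ε ^ j)⁻¹) = c j := by
    intro j hj
    rw [mul_assoc, inv_mul_cancel₀ (hone_sub_ne j hj), mul_one]
  have hγsub : ∀ j ∈ Finset.Icc 1 (r - 1),
      c j * (1 - (ε ^ j)⁻¹)⁻¹ - c j = c j * (1 - (ε ^ j)⁻¹)⁻¹ * (ε ^ j)⁻¹ := by
    intro j hj
    have h1 := hγc j hj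
    linear_combination h1
  -- a nonzero vector and an eigenvector of S
  haveI := hV
  haveI : Nontrivial V := IsSimpleModule.nontrivial (Cherednik k r ε 0 c) V
  obtain ⟨v0, hv0⟩ := exists_ne (0 : V)
  obtain ⟨i0, hi0r, u, hu0, hSu⟩ := exists_eigen_of_pow_eq_one hr hε Sop oS hv0
  -- simplicity in terms of k-subspaces
  have hsimple : ∀ W : Submodule k V, (∀ u ∈ W, Xop u ∈ W) → (∀ u ∈ W, Yop u ∈ W) →
      (∀ u ∈ W, Sop u ∈ W) → ∀ u0 ∈ W, u0 ≠ 0 → W = ⊤ := by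
    intro W hWX hWY hWS u0 hu0W hu0ne
    have hsm : ∀ (z : Cherednik k r ε 0 c) (u : V), u ∈ W → z • u ∈ W := by
      intro z
      obtain ⟨q, rfl⟩ := RingQuot.mkAlgHom_surjective k (CherednikRel k r ε 0 c) z
      induction q using FreeAlgebra.induction with
      | grade0 t =>
        intro u hu
        rw [AlgHom.commutes, algebraMap_smul]
        exact W.smul_mem t hu
      | grade1 x =>
        intro u hu
        fin_cases x
        · exact hWX u hu
        · exact hWY u hu
        · exact hWS u hu
      | mul q1 q2 h1 h2 =>
        intro u hu
        rw [map_mul, mul_smul]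
        exact h1 _ (h2 u hu)
      | add q1 q2 h1 h2 =>
        intro u hu
        rw [map_add, add_smul]
        exact W.add_mem (h1 u hu) (h2 u hu)
    let W' : Submodule (Cherednik k r ε 0 c) V :=
      { carrier := (W : Set V)
        add_mem' := fun hx hy => W.add_mem hx hy
        zero_mem' := W.zero_mem
        smul_mem' := fun z u hu => hsm z u hu }
    rcases eq_bot_or_eq_top W' with hbot | htop
    · exfalso
      have hm : u0 ∈ W' := hu0W
      rw [hbot] at hm
      exact hu0ne hm
    · ext u
      simp only [Submodule.mem_top, iff_true]
      have hm : u ∈ W' := htop ▸ Submodule.mem_top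
      exact hm

  by_cases ha : a = 0
  · -- case `a = 0`, so `b ≠ 0`; work with `Y`
    have hb : b ≠ 0 := fun h => hab ⟨ha, h⟩
    have hYinj : Function.Injective Yop := ladder_inj hr hb oYr
    set w := (Yop ^ (r - i0)) u with hwdef
    have hw0 : w ≠ 0 := fun h =>
      hu0 (end_pow_inj hYinj (r - i0) (by rw [map_zero]; exact h))
    have hSw : Sop w = w := by
      have h := ladder_eig oSY hSu (r - i0)
      rw [hwdef, h, ← pow_add, Nat.sub_add_cancel (le_of_lt hi0r), hε.pow_eq_one, one_smul]
    set nuf : ℕ → k := fun i => β + ∑ j ∈ Finset.Icc 1 (r - 1),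
      c j * (1 - (ε ^ j)⁻¹)⁻¹ * ε ^ ((i + r - 1) * j) with hnudef
    have hSvm : ∀ m : ℕ, Sop ((Yop ^ m) w) = (ε ^ m) • ((Yop ^ m) w) := by
      intro m
      have h := ladder_eig oSY (θ := (1 : k)) (by rw [one_smul]; exact hSw) m
      simpa using h
    have hτ : ∀ i : ℕ, (Yop * Xop) ((Yop ^ i) w) = nuf i • (Yop ^ i) w := by
      intro i
      rw [oYX, LinearMap.sub_apply, oXY, LinearMap.add_apply, LinearMap.smul_apply,
        Module.End.one_apply, LinearMap.sum_apply, LinearMap.sum_apply]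
      have hterm1 : ∀ j ∈ Finset.Icc 1 (r - 1),
          ((c j * (1 - (ε ^ j)⁻¹)⁻¹) • Sop ^ j) ((Yop ^ i) w)
          = (c j * (1 - (ε ^ j)⁻¹)⁻¹ * ε ^ (i * j)) • (Yop ^ i) w := by
        intro j hj
        rw [LinearMap.smul_apply, end_pow_eigen Sop (hSvm i) j, smul_smul, ← pow_mul]
      have hterm2 : ∀ j ∈ Finset.Icc 1 (r - 1),
          (c j • Sop ^ j) ((Yop ^ i) w) = (c j * ε ^ (i * j)) • (Yop ^ i) w := by
        intro j hj
        rw [LinearMap.smul_apply, end_pow_eigen Sop (hSvm i) j, smul_smul, ← pow_mul]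
      rw [Finset.sum_congr rfl hterm1, Finset.sum_congr rfl hterm2,
        ← Finset.sum_smul, ← Finset.sum_smul, ← add_smul, ← sub_smul]
      congr 1
      rw [hnudef]
      rw [add_sub_assoc, ← Finset.sum_sub_distrib]
      congr 1
      apply Finset.sum_congr rfl
      intro j hj
      rw [← sub_mul, hγsub j hj]
      have hle : j ≤ r * j := Nat.le_mul_of_pos_left j (by omega)
      have hinvj : (ε ^ j)⁻¹ = ε ^ ((r - 1) * j) := by
        apply inv_eq_of_mul_eq_one_right
        rw [← pow_add, Nat.sub_one_mul]
        have h8 : j + (r * j - j) = r * j := by omega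
        rw [h8, pow_mul, hε.pow_eq_one, one_pow]
      rw [hinvj, mul_assoc, ← pow_add, ← add_mul]
      have h9 : r - 1 + i = i + r - 1 := by omega
      rw [h9]
    obtain ⟨bas, hbas⟩ := ladder_basis hr hε hb oYr oSY hw0 hSw hτ
      (fun W h1 h2 h3 => hsimple W h2 h1 h3)
    have hfin : Module.finrank k V = r := by
      rw [Module.finrank_eq_card_basis bas, Fintype.card_fin]
    have hZs := ladder_Z_succ hYinj hτ
    have hZp := ladder_Zpow hZs r
    have h1 : (Yop ^ r) w = b • w := by rw [oYr]; simp
    have h3x : (Xop ^ r) w = 0 := by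
      rw [hXdef, ← map_pow, φapp, hxa w, ha, zero_smul]
    have h4 : (∏ j ∈ Finset.Icc 1 r, nuf j) • w = 0 := by
      rw [h1, map_smul, h3x, smul_zero] at hZp
      exact hZp.symm
    have hprodz : (∏ j ∈ Finset.Icc 1 r, nuf j) = 0 := by
      rcases smul_eq_zero.mp h4 with h6 | h6
      · exact h6
      · exact absurd h6 hw0
    have hgoal2 : ∏ m ∈ Finset.range r, (β + ∑ j ∈ Finset.Icc 1 (r - 1),
        c j * (1 - (ε ^ j)⁻¹)⁻¹ * ε ^ (m * j)) = ∏ j ∈ Finset.Icc 1 r, nuf j := by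
      conv_rhs => rw [← Finset.Ico_add_one_right_eq_Icc, Finset.prod_Ico_eq_prod_range]
      simp only [Nat.succ_sub_one, Nat.add_sub_cancel]
      apply Finset.prod_congr rfl
      intro m hm
      rw [hnudef]
      congr 1
      apply Finset.sum_congr rfl
      intro j hj
      congr 1
      symm
      have h9 : 1 + m + r - 1 = m + r := by omega
      rw [h9, add_mul, pow_add, pow_mul, pow_mul, hε.pow_eq_one, one_pow, mul_one]
    refine ⟨hfin, ?_, fun hane => absurd ha hane⟩
    rw [ha, zero_mul, hgoal2]
    exact hprodz.symm
  · -- case `a ≠ 0`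
    have hεinv : IsPrimitiveRoot ε⁻¹ r := hε.inv
    have hXinj : Function.Injective Xop := ladder_inj hr ha oXr
    set w := (Xop ^ i0) u with hwdef
    have hw0 : w ≠ 0 := fun h =>
      hu0 (end_pow_inj hXinj i0 (by rw [map_zero]; exact h))
    have hSw : Sop w = w := by
      have h := ladder_eig oSX hSu i0
      rw [hwdef, h, inv_pow, inv_mul_cancel₀ (pow_ne_zero _ hεne), one_smul]
    set muf : ℕ → k := fun i => β + ∑ j ∈ Finset.Icc 1 (r - 1),
      c j * (1 - (ε ^ j)⁻¹)⁻¹ * (ε ^ (i * j))⁻¹ with hmudef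
    have hSvm : ∀ m : ℕ, Sop ((Xop ^ m) w) = (ε⁻¹ ^ m) • ((Xop ^ m) w) := by
      intro m
      have h := ladder_eig oSX (θ := (1 : k)) (by rw [one_smul]; exact hSw) m
      simpa using h
    have hτ : ∀ i : ℕ, (Xop * Yop) ((Xop ^ i) w) = muf i • (Xop ^ i) w := by
      intro i
      rw [oXY, LinearMap.add_apply, LinearMap.smul_apply, Module.End.one_apply,
        LinearMap.sum_apply]
      have hterm : ∀ j ∈ Finset.Icc 1 (r - 1),
          ((c j * (1 - (ε ^ j)⁻¹)⁻¹) • Sop ^ j) ((Xop ^ i) w)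
          = (c j * (1 - (ε ^ j)⁻¹)⁻¹ * (ε ^ (i * j))⁻¹) • (Xop ^ i) w := by
        intro j hj
        rw [LinearMap.smul_apply, end_pow_eigen Sop (hSvm i) j, smul_smul]
        congr 1
        rw [← pow_mul, inv_pow]
      rw [Finset.sum_congr rfl hterm, ← Finset.sum_smul, ← add_smul, hmudef]
    obtain ⟨bas, hbas⟩ := ladder_basis hr hεinv ha oXr oSX hw0 hSw hτ hsimple
    have hfin : Module.finrank k V = r := by
      rw [Module.finrank_eq_card_basis bas, Fintype.card_fin]
    have hZs := ladder_Z_succ hXinj hτ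
    have hZ0 := ladder_Z_zero hr ha oXr hτ
    have hZp := ladder_Zpow hZs r
    have h1 : (Xop ^ r) w = a • w := by rw [oXr]; simp
    have h3 : (Yop ^ r) w = b • w := by
      rw [hYdef, ← map_pow, φapp, hyb w]
    have h4 : (a * b) • w = (∏ j ∈ Finset.Icc 1 r, muf j) • w := by
      rw [h1, map_smul, h3, smul_smul] at hZp
      exact hZp
    have hab2 : a * b = ∏ j ∈ Finset.Icc 1 r, muf j := by
      have h5 : (a * b - ∏ j ∈ Finset.Icc 1 r, muf j) • w = 0 := by
        rw [sub_smul, h4, sub_self]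
      rcases smul_eq_zero.mp h5 with h6 | h6
      · exact sub_eq_zero.mp h6
      · exact absurd h6 hw0
    have hprod : ∏ j ∈ Finset.Icc 1 r, muf j
        = ∏ m ∈ Finset.range r, (β + ∑ j ∈ Finset.Icc 1 (r - 1),
            c j * (1 - (ε ^ j)⁻¹)⁻¹ * ε ^ (m * j)) := by
      conv_lhs => rw [← Finset.Ico_add_one_right_eq_Icc, Finset.prod_Ico_eq_prod_range]
      simp only [Nat.succ_sub_one, Nat.add_sub_cancel]
      rw [← Finset.prod_range_reflect]
      apply Finset.prod_congr rfl
      intro m hm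
      rw [Finset.mem_range] at hm
      have h6 : 1 + (r - 1 - m) = r - m := by omega
      rw [h6]
      simp only [hmudef]
      congr 1
      apply Finset.sum_congr rfl
      intro j hj
      congr 1
      have h7 : ε ^ ((r - m) * j) * ε ^ (m * j) = 1 := by
        rw [← pow_add, ← add_mul, Nat.sub_add_cancel (le_of_lt hm), pow_mul,
          hε.pow_eq_one, one_pow]
      exact inv_eq_of_mul_eq_one_right h7
    refine ⟨hfin, by rw [hab2, hprod],
      fun _ => ⟨muf, bas, fun i => rfl, ?_, ?_, ?_, ?_, ?_⟩⟩
    · intro i h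
      have hl : Hx k r ε 0 c • bas ⟨i, Nat.lt_of_succ_lt h⟩
          = Xop (bas ⟨i, Nat.lt_of_succ_lt h⟩) := rfl
      rw [hl, hbas, hbas, ← Module.End.mul_apply, ← pow_succ']
    · have hl : Hx k r ε 0 c • bas ⟨r - 1, Nat.sub_lt hr one_pos⟩
          = Xop (bas ⟨r - 1, Nat.sub_lt hr one_pos⟩) := rfl
      rw [hl, hbas, hbas, ← Module.End.mul_apply, ← pow_succ']
      have h8 : ((⟨r - 1, Nat.sub_lt hr one_pos⟩ : Fin r) : ℕ) + 1 = r :=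
        Nat.sub_add_cancel hr
      rw [h8, oXr]
      simp
    · intro i h
      have hl : Hy k r ε 0 c • bas ⟨i + 1, h⟩ = Yop (bas ⟨i + 1, h⟩) := rfl
      rw [hl, hbas, hbas]
      exact hZs i
    · have hl : Hy k r ε 0 c • bas ⟨0, hr⟩ = Yop (bas ⟨0, hr⟩) := rfl
      rw [hl, hbas, hbas]
      simpa using hZ0
    · intro i
      have hl : Hs k r ε 0 c • bas i = Sop (bas i) := rfl
      rw [hl, hbas, ← inv_pow]
      exact hSvm i
end
end

section
/- Let V be a simple H'-module on which x^r and y^r both act as zero. Then there exist m ∈ Z/rZ and a positive integer D ≤ r such that V has a basis v_0, …, v_{D−1} with x v_i = v_{i+1} for 0 ≤ i ≤ D−2, x v_{D−1} = 0, y v_i = μ_i v_{i−1} for 1 ≤ i ≤ D−1, y v_0 = 0, and s v_i = ε^{m−i} v_i for 0 ≤ i ≤ D−1, where μ_i = − Σ_{l=0}^{i−1} Σ_{j=1}^{r−1} c_j ε^{(m−l)j}; in particular μ_D = 0 and μ_i ≠ 0 for 1 ≤ i ≤ D−1. -/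
open scoped BigOperators

noncomputable section

universe u

namespace CherednikAux

variable {k : Type u} [Field k] {r : ℕ} {ε t : k} {c : ℕ → k}

lemma relS : Hs k r ε t c ^ r = 1 := by
  have h := RingQuot.mkAlgHom_rel k
    (CherednikRel.spow (k := k) (r := r) (ε := ε) (t := t) (c := c))
  simpa [Hs, map_pow] using h

lemma relSX : Hs k r ε t c * Hx k r ε t c = ε⁻¹ • (Hx k r ε t c * Hs k r ε t c) := by
  have h := RingQuot.mkAlgHom_rel k
    (CherednikRel.sx (k := k) (r := r) (ε := ε) (t := t) (c := c))
  simpa [Hs, Hx, map_mul, map_smul] using h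

lemma relSY : Hs k r ε t c * Hy k r ε t c = ε • (Hy k r ε t c * Hs k r ε t c) := by
  have h := RingQuot.mkAlgHom_rel k
    (CherednikRel.sy (k := k) (r := r) (ε := ε) (t := t) (c := c))
  simpa [Hs, Hy, map_mul, map_smul] using h

lemma relYX : Hy k r ε t c * Hx k r ε t c = Hx k r ε t c * Hy k r ε t c +
    (algebraMap k (Cherednik k r ε t c) t - ∑ j ∈ Finset.Icc 1 (r - 1), c j • Hs k r ε t c ^ j) := by
  have h := RingQuot.mkAlgHom_rel k
    (CherednikRel.yx (k := k) (r := r) (ε := ε) (t := t) (c := c))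
  have h' : Hy k r ε t c * Hx k r ε t c - Hx k r ε t c * Hy k r ε t c =
      algebraMap k (Cherednik k r ε t c) t - ∑ j ∈ Finset.Icc 1 (r - 1), c j • Hs k r ε t c ^ j := by
    simpa [Hs, Hx, Hy, map_mul, map_sub, map_sum, map_smul, map_pow, AlgHom.commutes] using h
  exact sub_eq_iff_eq_add'.mp h'

lemma adjoin_top : Algebra.adjoin k ({Hx k r ε t c, Hy k r ε t c, Hs k r ε t c} :
    Set (Cherednik k r ε t c)) = ⊤ := by
  rw [eq_top_iff]
  intro a _
  obtain ⟨b, rfl⟩ := RingQuot.mkAlgHom_surjective k (CherednikRel k r ε t c) a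
  have hb : b ∈ Algebra.adjoin k (Set.range (FreeAlgebra.ι k)) := by
    rw [FreeAlgebra.adjoin_range_ι]; trivial
  have h2 : RingQuot.mkAlgHom k (CherednikRel k r ε t c) b ∈
      (Algebra.adjoin k (Set.range (FreeAlgebra.ι k))).map
        (RingQuot.mkAlgHom k (CherednikRel k r ε t c)) := ⟨b, hb, rfl⟩
  rw [AlgHom.map_adjoin] at h2
  refine Algebra.adjoin_mono ?_ h2
  rintro x ⟨y, ⟨i, rfl⟩, rfl⟩
  fin_cases i
  · exact Or.inl rfl
  · exact Or.inr (Or.inl rfl)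
  · exact Or.inr (Or.inr rfl)

end CherednikAux
/-- Proposition 2.8 (classification part): a simple `H'`-module `V` on which `x^r` and `y^r`
act as zero has, for some `m ∈ ℤ/rℤ` and some `0 < D ≤ r`, a basis `v_0, …, v_{D-1}` with
the explicit action of `x`, `y`, `s`, where
`μ_i = - ∑_{l=0}^{i-1} ∑_{j=1}^{r-1} c_j ε^{(m-l)j}`; in particular `μ_D = 0` and
`μ_i ≠ 0` for `1 ≤ i ≤ D-1`. -/
theorem stmt8 (k : Type u) [Field k] (p : ℕ) (hp : p.Prime) [CharP k p]
    (r : ℕ) (hr : 1 ≤ r) (hpr : ¬ p ∣ r) (ε : k) (hε : IsPrimitiveRoot ε r)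
    (c : ℕ → k)
    (V : Type u) [AddCommGroup V] [Module (Cherednik k r ε 0 c) V]
    [Module k V] [IsScalarTower k (Cherednik k r ε 0 c) V]
    (hV : IsSimpleModule (Cherednik k r ε 0 c) V)
    (hx0 : ∀ v : V, (Hx k r ε 0 c) ^ r • v = 0)
    (hy0 : ∀ v : V, (Hy k r ε 0 c) ^ r • v = 0) :
    ∃ (m : ZMod r) (D : ℕ) (hD : 0 < D), D ≤ r ∧
      ∃ (μ : ℕ → k) (bas : Module.Basis (Fin D) k V),
        (∀ i : ℕ, μ i = -
          ∑ l ∈ Finset.range i, ∑ j ∈ Finset.Icc 1 (r - 1),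
            c j * ε ^ ((m - (l : ZMod r)).val * j)) ∧
        (∀ i : ℕ, ∀ h : i + 1 < D,
          Hx k r ε 0 c • bas ⟨i, Nat.lt_of_succ_lt h⟩ = bas ⟨i + 1, h⟩) ∧
        Hx k r ε 0 c • bas ⟨D - 1, Nat.sub_lt hD one_pos⟩ = 0 ∧
        (∀ i : ℕ, ∀ h : i + 1 < D,
          Hy k r ε 0 c • bas ⟨i + 1, h⟩ = μ (i + 1) • bas ⟨i, Nat.lt_of_succ_lt h⟩) ∧
        Hy k r ε 0 c • bas ⟨0, hD⟩ = 0 ∧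
        (∀ i : Fin D, Hs k r ε 0 c • bas i =
          ε ^ ((m - ((i : ℕ) : ZMod r)).val) • bas i) ∧
        μ D = 0 ∧
        (∀ i : ℕ, 1 ≤ i → i < D → μ i ≠ 0) := by
  classical
  haveI := hV
  haveI : NeZero r := ⟨Nat.one_le_iff_ne_zero.mp hr⟩
  have hrpos : 0 < r := hr
  have relS : Hs k r ε 0 c ^ r = 1 := CherednikAux.relS
  have relSX : Hs k r ε 0 c * Hx k r ε 0 c = ε⁻¹ • (Hx k r ε 0 c * Hs k r ε 0 c) :=
    CherednikAux.relSX
  have relSY : Hs k r ε 0 c * Hy k r ε 0 c = ε • (Hy k r ε 0 c * Hs k r ε 0 c) :=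
    CherednikAux.relSY
  have relYX : Hy k r ε 0 c * Hx k r ε 0 c = Hx k r ε 0 c * Hy k r ε 0 c -
      ∑ j ∈ Finset.Icc 1 (r - 1), c j • Hs k r ε 0 c ^ j := by
    have h := CherednikAux.relYX (k := k) (r := r) (ε := ε) (t := 0) (c := c)
    rwa [map_zero, zero_sub, ← sub_eq_add_neg] at h
  set X := Hx k r ε 0 c with hXdef
  set Y := Hy k r ε 0 c with hYdef
  set S := Hs k r ε 0 c with hSdef
  have hε0 : ε ≠ 0 := hε.ne_zero (Nat.one_le_iff_ne_zero.mp hr)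
  have hεr : ε ^ r = 1 := hε.pow_eq_one
  have hrk : (r : k) ≠ 0 := fun h => hpr ((CharP.cast_eq_zero_iff k p r).mp h)
  have relYS : Y * S = ε⁻¹ • (S * Y) := by
    rw [relSY, smul_smul, inv_mul_cancel₀ hε0, one_smul]
  have hcomm : ∀ (a : Cherednik k r ε 0 c) (t : k) (w : V), a • (t • w) = t • (a • w) := by
    intro a t w
    rw [← algebraMap_smul (Cherednik k r ε 0 c) t w, ← mul_smul, ← Algebra.commutes, mul_smul,
      algebraMap_smul]
  have hspanstab : ∀ (a : Cherednik k r ε 0 c) (s : Set V),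
      (∀ x ∈ s, a • x ∈ Submodule.span k s) →
      ∀ w ∈ Submodule.span k s, a • w ∈ Submodule.span k s := by
    intro a s hgen w hw
    induction hw using Submodule.span_induction with
    | mem x hx => exact hgen x hx
    | zero => rw [smul_zero]; exact Submodule.zero_mem _
    | add x y hx hy ihx ihy => rw [smul_add]; exact Submodule.add_mem _ ihx ihy
    | smul t x hx ih => rw [hcomm]; exact Submodule.smul_mem _ t ih
  have hstab : ∀ (W : Submodule k V), (∀ w ∈ W, X • w ∈ W) → (∀ w ∈ W, Y • w ∈ W) →
      (∀ w ∈ W, S • w ∈ W) → ∀ (a : Cherednik k r ε 0 c), ∀ w ∈ W, a • w ∈ W := by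
    intro W hX1 hY1 hS1 a
    have ha : a ∈ Algebra.adjoin k ({X, Y, S} : Set (Cherednik k r ε 0 c)) := by
      rw [CherednikAux.adjoin_top]; trivial
    induction ha using Algebra.adjoin_induction with
    | mem x hx =>
      rcases hx with rfl | rfl | rfl
      · exact hX1
      · exact hY1
      · exact hS1
    | algebraMap t => intro w hw; rw [algebraMap_smul]; exact W.smul_mem t hw
    | add x y hx hy ihx ihy => intro w hw; rw [add_smul]; exact W.add_mem (ihx w hw) (ihy w hw)
    | mul x y hx hy ihx ihy => intro w hw; rw [mul_smul]; exact ihx _ (ihy w hw)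
  have hsimple : ∀ (W : Submodule k V), (∀ w ∈ W, X • w ∈ W) → (∀ w ∈ W, Y • w ∈ W) →
      (∀ w ∈ W, S • w ∈ W) → (∃ w ∈ W, w ≠ 0) → ∀ u : V, u ∈ W := by
    rintro W h1 h2 h3 ⟨w, hw, hwne⟩ u
    let WA : Submodule (Cherednik k r ε 0 c) V :=
      { carrier := W
        add_mem' := fun ha hb => W.add_mem ha hb
        zero_mem' := W.zero_mem
        smul_mem' := fun a x hx => hstab W h1 h2 h3 a x hx }
    rcases eq_bot_or_eq_top WA with hbot | htop
    · exfalso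
      apply hwne
      have hwW : w ∈ WA := hw
      rw [hbot] at hwW
      simpa using hwW
    · have : u ∈ WA := by rw [htop]; trivial
      exact this
  haveI : Nontrivial V := IsSimpleModule.nontrivial (Cherednik k r ε 0 c) V
  -- roots of unity arithmetic
  have hper : ∀ a : ℕ, ε ^ (a % r) = ε ^ a := by
    intro a
    conv_rhs => rw [← Nat.div_add_mod a r]
    rw [pow_add, pow_mul, hεr, one_pow, one_mul]
  set e : ZMod r → k := fun a => ε ^ a.val with he
  have he_nat : ∀ n : ℕ, e n = ε ^ n := by
    intro n; simp only [he]; rw [ZMod.val_natCast, hper]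
  have he_add : ∀ a b : ZMod r, e (a + b) = e a * e b := by
    intro a b; simp only [he]; rw [ZMod.val_add, hper, pow_add]
  have he_one : e 1 = ε := by
    have h := he_nat 1; rwa [Nat.cast_one, pow_one] at h
  have he_succ : ∀ a : ZMod r, e (a + 1) = ε * e a := fun a => by
    rw [he_add, he_one, mul_comm]
  have he_inj : Function.Injective e := by
    intro a b h
    exact ZMod.val_injective r (hε.pow_inj (ZMod.val_lt a) (ZMod.val_lt b) h)
  -- a nonzero vector killed by Y
  obtain ⟨w0, hw0⟩ := exists_ne (0 : V)
  have hexn : ∃ n, Y ^ n • w0 = 0 := ⟨r, hy0 w0⟩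
  have hn0 : Nat.find hexn ≠ 0 := by
    intro h
    have h2 := Nat.find_spec hexn
    rw [h, pow_zero, one_smul] at h2
    exact hw0 h2
  have hwne : Y ^ (Nat.find hexn - 1) • w0 ≠ 0 :=
    Nat.find_min hexn (Nat.sub_lt (Nat.pos_of_ne_zero hn0) one_pos)
  have hYw : Y • (Y ^ (Nat.find hexn - 1) • w0) = 0 := by
    rw [← mul_smul, ← pow_succ', Nat.sub_add_cancel (Nat.one_le_iff_ne_zero.mpr hn0)]
    exact Nat.find_spec hexn
  set w : V := Y ^ (Nat.find hexn - 1) • w0 with hwdef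
  -- Y kills S^j • w
  have hYS : ∀ u : V, Y • u = 0 → Y • (S • u) = 0 := by
    intro u hu
    rw [← mul_smul, relYS, smul_assoc, mul_smul, hu, smul_zero, smul_zero]
  have hYSpow : ∀ (j : ℕ) (u : V), Y • u = 0 → Y • (S ^ j • u) = 0 := by
    intro j
    induction j with
    | zero => intro u hu; simpa using hu
    | succ j ih =>
      intro u hu
      rw [pow_succ', mul_smul]
      exact hYS _ (ih u hu)
  have hSw : S ^ r • w = w := by rw [relS, one_smul]
  -- the projections
  set uu : ℕ → V := fun a => ∑ j ∈ Finset.range r, (ε ^ (a * j))⁻¹ • (S ^ j • w) with huu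
  have hshift : ∀ g : ℕ → V, g r = g 0 →
      ∑ j ∈ Finset.range r, g (j + 1) = ∑ j ∈ Finset.range r, g j := by
    intro g hgr
    have h1 := Finset.sum_range_succ' g r
    have h2 := Finset.sum_range_succ g r
    rw [h2, hgr] at h1
    exact (add_right_cancel h1).symm
  have hSuu : ∀ a : ℕ, S • uu a = ε ^ a • uu a := by
    intro a
    have hterm : ∀ j : ℕ, S • ((ε ^ (a * j))⁻¹ • (S ^ j • w)) =
        ε ^ a • ((ε ^ (a * (j + 1)))⁻¹ • (S ^ (j + 1) • w)) := by
      intro j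
      have h1 : ε ^ (a * (j + 1)) = ε ^ (a * j) * ε ^ a := by
        rw [← pow_add, mul_add, mul_one]
      have hsc : (ε ^ (a * j))⁻¹ = ε ^ a * (ε ^ (a * (j + 1)))⁻¹ := by
        rw [h1, mul_inv, mul_comm ((ε ^ (a * j))⁻¹) ((ε ^ a)⁻¹), ← mul_assoc,
          mul_inv_cancel₀ (pow_ne_zero a hε0), one_mul]
      rw [hcomm, ← mul_smul S, ← pow_succ', hsc, mul_smul]
    calc S • uu a = ∑ j ∈ Finset.range r, S • ((ε ^ (a * j))⁻¹ • (S ^ j • w)) := by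
          rw [huu, Finset.smul_sum]
      _ = ∑ j ∈ Finset.range r, ε ^ a • ((ε ^ (a * (j + 1)))⁻¹ • (S ^ (j + 1) • w)) :=
          Finset.sum_congr rfl (fun j _ => hterm j)
      _ = ε ^ a • ∑ j ∈ Finset.range r, (ε ^ (a * (j + 1)))⁻¹ • (S ^ (j + 1) • w) := by
          rw [Finset.smul_sum]
      _ = ε ^ a • uu a := by
          rw [huu]
          congr 1
          refine hshift (fun j => (ε ^ (a * j))⁻¹ • (S ^ j • w)) ?_
          show (ε ^ (a * r))⁻¹ • (S ^ r • w) = (ε ^ (a * 0))⁻¹ • (S ^ 0 • w)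
          rw [hSw, mul_comm a r, pow_mul, hεr, one_pow, inv_one]
          simp
  have hYuu : ∀ a : ℕ, Y • uu a = 0 := by
    intro a
    rw [huu]
    simp only []
    rw [Finset.smul_sum]
    refine Finset.sum_eq_zero fun j _ => ?_
    rw [hcomm, hYSpow j w hYw, smul_zero]
  have huur : ∑ a ∈ Finset.range r, uu a = (r : k) • w := by
    rw [huu]
    simp only []
    rw [Finset.sum_comm]
    have hinner : ∀ j : ℕ, ∑ a ∈ Finset.range r, (ε ^ (a * j))⁻¹ • (S ^ j • w) =
        (∑ a ∈ Finset.range r, ((ε ^ j)⁻¹) ^ a) • (S ^ j • w) := by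
      intro j
      rw [Finset.sum_smul]
      refine Finset.sum_congr rfl fun a _ => ?_
      rw [inv_pow, ← pow_mul, mul_comm j a]
    rw [Finset.sum_congr rfl (fun j _ => hinner j)]
    rw [Finset.sum_eq_single 0]
    · simp [Finset.card_range]
    · intro j hj hj0
      have hζr : ((ε ^ j)⁻¹) ^ r = 1 := by
        rw [inv_pow, ← pow_mul, mul_comm j r, pow_mul, hεr, one_pow, inv_one]
      have hζ1 : (ε ^ j)⁻¹ ≠ 1 := by
        intro h
        exact hε.pow_ne_one_of_pos_of_lt hj0 (Finset.mem_range.mp hj)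
          (inv_eq_one.mp h)
      have hgeo := geom_sum_mul ((ε ^ j)⁻¹) r
      rw [hζr, sub_self] at hgeo
      rcases mul_eq_zero.mp hgeo with h | h
      · rw [h, zero_smul]
      · exact absurd (sub_eq_zero.mp h) hζ1
    · intro h
      exact absurd (Finset.mem_range.mpr hrpos) h
  -- an eigenvector of S killed by Y
  have hex0 : ∃ (m : ZMod r) (v0 : V), v0 ≠ 0 ∧ Y • v0 = 0 ∧ S • v0 = e m • v0 := by
    have hune : ∃ a ∈ Finset.range r, uu a ≠ 0 := by
      by_contra h
      push_neg at h
      have h2 : ∑ a ∈ Finset.range r, uu a = 0 := Finset.sum_eq_zero h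
      rw [huur] at h2
      rcases smul_eq_zero.mp h2 with h3 | h3
      · exact hrk h3
      · exact hwne h3
    obtain ⟨a, _, hane⟩ := hune
    refine ⟨(a : ZMod r), uu a, hane, hYuu a, ?_⟩
    rw [he_nat]
    exact hSuu a
  obtain ⟨m, v0, hv0ne, hYv0, hSv0⟩ := hex0
  -- the vectors v i = X^i • v0
  set v : ℕ → V := fun i => (X ^ i) • v0 with hv
  have hv0' : v 0 = v0 := by simp only [hv, pow_zero, one_smul]
  have hXv : ∀ i : ℕ, X • v i = v (i + 1) := by
    intro i
    simp only [hv]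
    rw [← mul_smul, ← pow_succ']
  have hYv0'' : Y • v 0 = 0 := by rw [hv0']; exact hYv0
  have hSv : ∀ i : ℕ, S • v i = e (m - (i : ZMod r)) • v i := by
    intro i
    induction i with
    | zero =>
      rw [hv0']
      simpa using hSv0
    | succ i ih =>
      have harith : (m - ((i + 1 : ℕ) : ZMod r)) + 1 = m - (i : ℕ) := by
        push_cast
        ring
      have hsc : e (m - ((i : ℕ) : ZMod r)) = ε * e (m - (((i + 1) : ℕ) : ZMod r)) := by
        rw [← he_succ, harith]
      calc S • v (i + 1) = S • (X • v i) := by rw [hXv]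
        _ = ε⁻¹ • ((X * S) • v i) := by rw [← mul_smul, relSX, smul_assoc]
        _ = ε⁻¹ • (X • (S • v i)) := by rw [mul_smul]
        _ = ε⁻¹ • (X • (e (m - (i : ℕ)) • v i)) := by rw [ih]
        _ = (ε⁻¹ * e (m - (i : ℕ))) • (X • v i) := by rw [hcomm, smul_smul]
        _ = e (m - ((i + 1 : ℕ) : ZMod r)) • v (i + 1) := by
            rw [hXv, hsc, ← mul_assoc, inv_mul_cancel₀ hε0, one_mul]
  have hSpowv : ∀ (j i : ℕ), S ^ j • v i = (e (m - (i : ZMod r))) ^ j • v i := by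
    intro j i
    induction j with
    | zero => simp
    | succ j ih =>
      rw [pow_succ', mul_smul, ih, hcomm, hSv, smul_smul, ← pow_succ]
  -- the scalars μ
  set μ : ℕ → k := fun i => -
      ∑ l ∈ Finset.range i, ∑ j ∈ Finset.Icc 1 (r - 1),
        c j * ε ^ ((m - (l : ZMod r)).val * j) with hμ
  have hμe : ∀ (l j : ℕ), ε ^ ((m - (l : ZMod r)).val * j) = (e (m - (l : ZMod r))) ^ j := by
    intro l j
    rw [pow_mul]
  have hμ0 : μ 0 = 0 := by simp [hμ]
  have hμrec : ∀ i : ℕ, μ (i + 1) = μ i -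
      ∑ j ∈ Finset.Icc 1 (r - 1), c j * (e (m - (i : ZMod r))) ^ j := by
    intro i
    simp only [hμ, Finset.sum_range_succ, hμe]
    ring
  have hsumv : ∀ i : ℕ, (∑ j ∈ Finset.Icc 1 (r - 1), c j • S ^ j) • v i =
      (∑ j ∈ Finset.Icc 1 (r - 1), c j * (e (m - (i : ZMod r))) ^ j) • v i := by
    intro i
    rw [Finset.sum_smul, Finset.sum_smul]
    refine Finset.sum_congr rfl fun j _ => ?_
    rw [smul_assoc, hSpowv, smul_smul]
  have hYv : ∀ i : ℕ, Y • v (i + 1) = μ (i + 1) • v i := by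
    intro i
    induction i with
    | zero =>
      have h1 : Y • v 1 = X • (Y • v 0) -
          (∑ j ∈ Finset.Icc 1 (r - 1), c j * (e (m - ((0 : ℕ) : ZMod r))) ^ j) • v 0 := by
        rw [← hXv 0, ← mul_smul, relYX, sub_smul, mul_smul, hsumv 0]
      rw [h1, hYv0'', smul_zero, zero_sub, ← neg_smul, hμrec 0, hμ0, zero_sub]
    | succ i ih =>
      have h1 : Y • v (i + 2) = X • (Y • v (i + 1)) -
          (∑ j ∈ Finset.Icc 1 (r - 1), c j * (e (m - ((i + 1 : ℕ) : ZMod r))) ^ j) • v (i + 1) := by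
        rw [← hXv (i + 1), ← mul_smul, relYX, sub_smul, mul_smul, hsumv (i + 1)]
      rw [h1, ih, hcomm, hXv, ← sub_smul, ← hμrec (i + 1)]
  -- the dimension D
  have hvr : v r = 0 := by simp only [hv]; exact hx0 v0
  have hexD : ∃ n, v n = 0 := ⟨r, hvr⟩
  set D := Nat.find hexD with hDdef
  have hvD : v D = 0 := Nat.find_spec hexD
  have hvne : ∀ i : ℕ, i < D → v i ≠ 0 := fun i hi => Nat.find_min hexD hi
  have hD : 0 < D := by
    rcases Nat.eq_zero_or_pos D with h | h
    · exfalso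
      apply hv0ne
      rw [← hv0', ← h]
      exact hvD
    · exact h
  have hDr : D ≤ r := Nat.find_le hvr
  -- linear independence via distinct eigenvalues of S
  set Send : Module.End k V :=
    { toFun := fun u => S • u
      map_add' := fun u1 u2 => smul_add S u1 u2
      map_smul' := fun t u => hcomm S t u } with hSend
  have heig : ∀ i : Fin D, Send.HasEigenvector (e (m - ((i : ℕ) : ZMod r))) (v (i : ℕ)) := by
    intro i
    constructor
    · rw [Module.End.mem_eigenspace_iff]
      exact hSv i
    · exact hvne i i.2
  have hinj : Function.Injective (fun i : Fin D => e (m - ((i : ℕ) : ZMod r))) := by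
    intro i j h
    have h2 : m - ((i : ℕ) : ZMod r) = m - ((j : ℕ) : ZMod r) := he_inj h
    have h3 : ((i : ℕ) : ZMod r) = ((j : ℕ) : ZMod r) := sub_right_inj.mp h2
    have h4 : (i : ℕ) = (j : ℕ) := by
      have hi := ZMod.val_cast_of_lt (lt_of_lt_of_le i.2 hDr)
      have hj := ZMod.val_cast_of_lt (lt_of_lt_of_le j.2 hDr)
      rw [← hi, ← hj, h3]
    exact Fin.ext h4
  have hLI : LinearIndependent k (fun i : Fin D => v (i : ℕ)) :=
    Send.eigenvectors_linearIndependent' _ hinj _ heig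
  -- spanning
  have hXW : ∀ u ∈ Submodule.span k (Set.range fun i : Fin D => v (i : ℕ)),
      X • u ∈ Submodule.span k (Set.range fun i : Fin D => v (i : ℕ)) := by
    apply hspanstab
    rintro x ⟨i, rfl⟩
    rw [hXv]
    by_cases h : (i : ℕ) + 1 < D
    · exact Submodule.subset_span ⟨⟨(i : ℕ) + 1, h⟩, rfl⟩
    · have h2 : (i : ℕ) + 1 = D := by
        have := i.2
        omega
      rw [h2, hvD]
      exact Submodule.zero_mem _
  have hYW : ∀ u ∈ Submodule.span k (Set.range fun i : Fin D => v (i : ℕ)),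
      Y • u ∈ Submodule.span k (Set.range fun i : Fin D => v (i : ℕ)) := by
    apply hspanstab
    rintro x ⟨i, rfl⟩
    beta_reduce
    rcases Nat.eq_zero_or_pos (i : ℕ) with h0 | h0
    · rw [h0, hYv0'']
      exact Submodule.zero_mem _
    · obtain ⟨i', hi'⟩ : ∃ i', (i : ℕ) = i' + 1 := ⟨(i : ℕ) - 1, by omega⟩
      rw [hi', hYv i']
      refine Submodule.smul_mem _ _ (Submodule.subset_span ⟨⟨i', ?_⟩, rfl⟩)
      have := i.2
      omega
  have hSW : ∀ u ∈ Submodule.span k (Set.range fun i : Fin D => v (i : ℕ)),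
      S • u ∈ Submodule.span k (Set.range fun i : Fin D => v (i : ℕ)) := by
    apply hspanstab
    rintro x ⟨i, rfl⟩
    rw [hSv]
    exact Submodule.smul_mem _ _ (Submodule.subset_span ⟨i, rfl⟩)
  have hWtop : ∀ u : V, u ∈ Submodule.span k (Set.range fun i : Fin D => v (i : ℕ)) :=
    hsimple _ hXW hYW hSW
      ⟨v 0, Submodule.subset_span ⟨⟨0, hD⟩, rfl⟩, hvne 0 hD⟩
  have hsp : ⊤ ≤ Submodule.span k (Set.range fun i : Fin D => v (i : ℕ)) :=
    fun u _ => hWtop u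
  set bas : Module.Basis (Fin D) k V := Module.Basis.mk hLI hsp with hbas
  have hbasapp : ∀ i : Fin D, bas i = v (i : ℕ) := fun i => by
    rw [hbas, Module.Basis.mk_apply]
  -- μ D = 0
  have hμD : μ D = 0 := by
    have hD1 : D - 1 + 1 = D := by omega
    have h := hYv (D - 1)
    rw [hD1, hvD, smul_zero] at h
    rcases smul_eq_zero.mp h.symm with h' | h'
    · exact h'
    · exact absurd h' (hvne (D - 1) (by omega))
  -- μ i ≠ 0 for 1 ≤ i < D
  have hμne : ∀ i : ℕ, 1 ≤ i → i < D → μ i ≠ 0 := by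
    intro i h1 h2 hμi
    have hXT : ∀ u ∈ Submodule.span k (Set.range fun j : Fin (D - i) => v (i + (j : ℕ))),
        X • u ∈ Submodule.span k (Set.range fun j : Fin (D - i) => v (i + (j : ℕ))) := by
      apply hspanstab
      rintro x ⟨j, rfl⟩
      beta_reduce
      rw [hXv]
      by_cases h : i + (j : ℕ) + 1 < D
      · refine Submodule.subset_span ⟨⟨(j : ℕ) + 1, by omega⟩, ?_⟩
        show v (i + ((j : ℕ) + 1)) = v (i + (j : ℕ) + 1)
        rw [← add_assoc]
      · have h3 : i + (j : ℕ) + 1 = D := by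
          have := j.2
          omega
        rw [h3, hvD]
        exact Submodule.zero_mem _
    have hYT : ∀ u ∈ Submodule.span k (Set.range fun j : Fin (D - i) => v (i + (j : ℕ))),
        Y • u ∈ Submodule.span k (Set.range fun j : Fin (D - i) => v (i + (j : ℕ))) := by
      apply hspanstab
      rintro x ⟨j, rfl⟩
      beta_reduce
      rcases Nat.eq_zero_or_pos (j : ℕ) with h0 | h0
      · have hi1 : i + (j : ℕ) = (i - 1) + 1 := by omega
        rw [hi1, hYv (i - 1)]
        have hi2 : i - 1 + 1 = i := by omega
        rw [hi2, hμi, zero_smul]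
        exact Submodule.zero_mem _
      · obtain ⟨j', hj'⟩ : ∃ j', (j : ℕ) = j' + 1 := ⟨(j : ℕ) - 1, by omega⟩
        have hi1 : i + (j : ℕ) = (i + j') + 1 := by omega
        rw [hi1, hYv (i + j')]
        refine Submodule.smul_mem _ _ (Submodule.subset_span ⟨⟨j', ?_⟩, rfl⟩)
        have := j.2
        omega
    have hST : ∀ u ∈ Submodule.span k (Set.range fun j : Fin (D - i) => v (i + (j : ℕ))),
        S • u ∈ Submodule.span k (Set.range fun j : Fin (D - i) => v (i + (j : ℕ))) := by
      apply hspanstab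
      rintro x ⟨j, rfl⟩
      beta_reduce
      rw [hSv]
      exact Submodule.smul_mem _ _ (Submodule.subset_span ⟨j, rfl⟩)
    have hmemall : ∀ u : V, u ∈
        Submodule.span k (Set.range fun j : Fin (D - i) => v (i + (j : ℕ))) := by
      refine hsimple _ hXT hYT hST ⟨v i, Submodule.subset_span ⟨⟨0, by omega⟩, ?_⟩, hvne i h2⟩
      show v (i + 0) = v i
      rw [Nat.add_zero]
    have h0mem : v 0 ∈ Submodule.span k
        ((fun i : Fin D => v (i : ℕ)) '' {idx : Fin D | i ≤ (idx : ℕ)}) := by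
      refine Submodule.span_mono ?_ (hmemall (v 0))
      rintro x ⟨j, rfl⟩
      refine ⟨⟨i + (j : ℕ), by have := j.2; omega⟩, ?_, rfl⟩
      show i ≤ i + (j : ℕ)
      omega
    have hnot := hLI.notMem_span_image (s := {idx : Fin D | i ≤ (idx : ℕ)})
      (x := (⟨0, hD⟩ : Fin D)) (by
        intro hmem
        have h0 : ((⟨0, hD⟩ : Fin D) : ℕ) = 0 := rfl
        rw [Set.mem_setOf_eq, h0] at hmem
        omega)
    exact hnot h0mem
  -- assemble
  refine ⟨m, D, hD, hDr, μ, bas, fun i => by rw [hμ], ?_, ?_, ?_, ?_, ?_, hμD, hμne⟩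
  · intro i h
    rw [hbasapp, hbasapp]
    exact hXv i
  · rw [hbasapp, hXv]
    have h3 : D - 1 + 1 = D := by omega
    rw [h3, hvD]
  · intro i h
    rw [hbasapp, hbasapp]
    exact hYv i
  · rw [hbasapp]
    exact hYv0''
  · intro i
    rw [hbasapp, hSv]
end
end

section
/- In H, the commutator [y, x^r] = y x^r − x^r y equals r·x^{r−1} (where r is regarded in k via the natural map), and consequently [y, x^{pr}] = 0. -/
open scoped BigOperators

noncomputable section

universe u

lemma aux_comm2 {R : Type u} [Ring R] (X Y W : R) (h : Y * X - X * Y = W)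
    (hc : X * W = W * X) :
    ∀ m : ℕ, Y * X ^ (m + 1) - X ^ (m + 1) * Y = (m + 1) • (W * X ^ m) := by
  intro m
  induction m with
  | zero => simpa using h
  | succ n ih =>
    have hcomm : X ^ (n + 1) * W = W * X ^ (n + 1) := Commute.pow_left hc (n + 1)
    have e : Y * X ^ (n + 2) - X ^ (n + 2) * Y
        = (Y * X ^ (n + 1) - X ^ (n + 1) * Y) * X + X ^ (n + 1) * (Y * X - X * Y) := by
      rw [pow_succ]; noncomm_ring
    rw [e, ih, h, smul_mul_assoc, mul_assoc, ← pow_succ, hcomm]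
    exact (succ_nsmul _ _).symm

lemma aux_comm {k : Type u} [Field k] {R : Type u} [Ring R] [Algebra k R]
    (X Y : R) (F : Finset ℕ) (S : ℕ → R) (q c : ℕ → k)
    (hS : ∀ j ∈ F, S j * X = q j • (X * S j))
    (h : Y * X - X * Y = 1 - ∑ j ∈ F, c j • S j) :
    ∀ m : ℕ, Y * X ^ (m + 1) - X ^ (m + 1) * Y
      = ((m + 1 : ℕ) : k) • X ^ m
        - ∑ j ∈ F, (c j * ∑ i ∈ Finset.range (m + 1), q j ^ i) • (X ^ m * S j) := by
  intro m
  induction m with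
  | zero => simpa using h
  | succ n ih =>
    have e : Y * X ^ (n + 2) - X ^ (n + 2) * Y
        = (Y * X ^ (n + 1) - X ^ (n + 1) * Y) * X + X ^ (n + 1) * (Y * X - X * Y) := by
      rw [pow_succ]; noncomm_ring
    rw [e, ih, h]
    rw [sub_mul, mul_sub, mul_one, smul_mul_assoc, ← pow_succ, Finset.sum_mul,
      Finset.mul_sum]
    have h1 : ∀ j ∈ F,
        (c j * ∑ i ∈ Finset.range (n + 1), q j ^ i) • (X ^ n * S j) * X
          = (c j * (q j * ∑ i ∈ Finset.range (n + 1), q j ^ i)) • (X ^ (n + 1) * S j) := by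
      intro j hj
      rw [smul_mul_assoc, mul_assoc, hS j hj, mul_smul_comm, smul_smul, ← mul_assoc,
        ← pow_succ]
      congr 1
      ring
    have h2 : ∀ j ∈ F,
        X ^ (n + 1) * (c j • S j) = c j • (X ^ (n + 1) * S j) := fun j _ => mul_smul_comm _ _ _
    rw [Finset.sum_congr rfl h1, Finset.sum_congr rfl h2]
    have key : ∀ j ∈ F,
        (c j * (q j * ∑ i ∈ Finset.range (n + 1), q j ^ i)) • (X ^ (n + 1) * S j)
          + c j • (X ^ (n + 1) * S j)
        = (c j * ∑ i ∈ Finset.range (n + 2), q j ^ i) • (X ^ (n + 1) * S j) := by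
      intro j hj
      rw [← add_smul]
      congr 1
      rw [geom_sum_succ (x := q j) (n := n + 1)]
      ring
    calc ((n + 1 : ℕ) : k) • X ^ (n + 1)
          - ∑ j ∈ F, (c j * (q j * ∑ i ∈ Finset.range (n + 1), q j ^ i)) • (X ^ (n + 1) * S j)
          + (X ^ (n + 1) - ∑ j ∈ F, c j • (X ^ (n + 1) * S j))
        = ((n + 1 : ℕ) : k) • X ^ (n + 1) + X ^ (n + 1)
          - ∑ j ∈ F, ((c j * (q j * ∑ i ∈ Finset.range (n + 1), q j ^ i)) • (X ^ (n + 1) * S j)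
              + c j • (X ^ (n + 1) * S j)) := by
          rw [Finset.sum_add_distrib]; abel
      _ = ((n + 1 + 1 : ℕ) : k) • X ^ (n + 1)
          - ∑ j ∈ F, (c j * ∑ i ∈ Finset.range (n + 2), q j ^ i) • (X ^ (n + 1) * S j) := by
          rw [Finset.sum_congr rfl key]
          congr 1
          push_cast
          simp [add_smul]

section rels
variable (k : Type u) [Field k] (r : ℕ) (ε t : k) (c : ℕ → k)

lemma rel_spow_x : ∀ j : ℕ, Hs k r ε t c ^ j * Hx k r ε t c
    = (ε ^ j)⁻¹ • (Hx k r ε t c * Hs k r ε t c ^ j) := by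
  intro j
  induction j with
  | zero => simp
  | succ n ih =>
    rw [pow_succ, mul_assoc, rel_sx, mul_smul_comm, ← mul_assoc, ih, smul_mul_assoc,
      smul_smul, mul_assoc, ← pow_succ]
    congr 1
    rw [pow_succ, mul_inv, mul_comm]

end rels

/-- (From the proof of Lemma 3.2): in `H`, `[y, x^r] = r • x^{r-1}` (with `r` regarded in `k`),
and consequently `[y, x^{pr}] = 0`. -/
theorem stmt11 (k : Type u) [Field k] (p : ℕ) (hp : p.Prime) [CharP k p]
    (r : ℕ) (hr : 1 ≤ r) (hpr : ¬ p ∣ r) (ε : k) (hε : IsPrimitiveRoot ε r)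
    (c : ℕ → k) :
    Hy k r ε 1 c * Hx k r ε 1 c ^ r - Hx k r ε 1 c ^ r * Hy k r ε 1 c =
      (r : k) • Hx k r ε 1 c ^ (r - 1) ∧
    Hy k r ε 1 c * Hx k r ε 1 c ^ (p * r) - Hx k r ε 1 c ^ (p * r) * Hy k r ε 1 c = 0 := by
  set X := Hx k r ε 1 c with hX
  set Y := Hy k r ε 1 c with hY
  set S := Hs k r ε 1 c with hS
  have hyx : Y * X - X * Y = 1 - ∑ j ∈ Finset.Icc 1 (r - 1), c j • S ^ j := by
    simpa using rel_yx k r ε 1 c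
  have hcommgen := aux_comm X Y (Finset.Icc 1 (r - 1)) (fun j => S ^ j)
    (fun j => (ε ^ j)⁻¹) c (fun j _ => rel_spow_x k r ε 1 c j) hyx
  -- part 1
  have hgeom : ∀ j ∈ Finset.Icc 1 (r - 1), ∑ i ∈ Finset.range r, ((ε ^ j)⁻¹) ^ i = 0 := by
    intro j hj
    rw [Finset.mem_Icc] at hj
    have hjr : j < r := lt_of_le_of_lt hj.2 (Nat.sub_lt hr one_pos)
    have hne : (ε ^ j)⁻¹ ≠ 1 := by
      rw [inv_ne_one]
      exact hε.pow_ne_one_of_pos_of_lt (Nat.one_le_iff_ne_zero.mp hj.1) hjr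
    have hpow : ((ε ^ j)⁻¹) ^ r = 1 := by
      have h' : (ε ^ j) ^ r = 1 := by
        rw [← pow_mul, mul_comm, pow_mul, hε.pow_eq_one, one_pow]
      rw [inv_pow, h', inv_one]
    rw [geom_sum_eq hne, hpow, sub_self, zero_div]
  have h1 : Y * X ^ r - X ^ r * Y = (r : k) • X ^ (r - 1) := by
    have hr' : r - 1 + 1 = r := Nat.succ_pred_eq_of_pos hr
    have := hcommgen (r - 1)
    rw [hr'] at this
    rw [this, Finset.sum_congr rfl (fun j hj => by rw [hgeom j hj, mul_zero, zero_smul]),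
      Finset.sum_const, smul_zero, sub_zero]
  refine ⟨h1, ?_⟩
  -- part 2
  have hc : X ^ r * ((r : k) • X ^ (r - 1)) = ((r : k) • X ^ (r - 1)) * X ^ r := by
    rw [mul_smul_comm, smul_mul_assoc, ← pow_add, ← pow_add, add_comm]
  have h2 := aux_comm2 (X ^ r) Y ((r : k) • X ^ (r - 1)) h1 hc (p - 1)
  have hp' : p - 1 + 1 = p := Nat.succ_pred_eq_of_pos hp.pos
  rw [hp'] at h2
  rw [mul_comm p r, pow_mul, h2, ← Nat.cast_smul_eq_nsmul k, CharP.cast_eq_zero, zero_smul]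
end
end

section
/- H is finitely generated as a module over its center; in fact the finitely many elements x^i y^j s^l with 0 ≤ i, j ≤ pr−1 and 0 ≤ l ≤ r−1 generate H as a module over its center. -/
open scoped BigOperators

noncomputable section

universe u

section Aux

variable (k : Type u) [Field k] (r : ℕ) (ε : k) (c : ℕ → k)

local notation "XX" => Hx k r ε 1 c
local notation "YY" => Hy k r ε 1 c
local notation "SS" => Hs k r ε 1 c
local notation "HH" => Cherednik k r ε 1 c

lemma hs_pow : SS ^ r = 1 := by
  have := RingQuot.mkAlgHom_rel k (CherednikRel.spow (k := k) (r := r) (ε := ε) (t := 1) (c := c))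
  simpa [Hs, map_pow] using this

lemma hsx : SS * XX = ε⁻¹ • (XX * SS) := by
  have := RingQuot.mkAlgHom_rel k (CherednikRel.sx (k := k) (r := r) (ε := ε) (t := 1) (c := c))
  simpa [Hs, Hx, map_mul, map_smul] using this

lemma hsy : SS * YY = ε • (YY * SS) := by
  have := RingQuot.mkAlgHom_rel k (CherednikRel.sy (k := k) (r := r) (ε := ε) (t := 1) (c := c))
  simpa [Hs, Hy, map_mul, map_smul] using this

lemma hyx : YY * XX - XX * YY = 1 - ∑ j ∈ Finset.Icc 1 (r - 1), c j • SS ^ j := by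
  have := RingQuot.mkAlgHom_rel k (CherednikRel.yx (k := k) (r := r) (ε := ε) (t := 1) (c := c))
  simpa [Hs, Hx, Hy, map_mul, map_smul, map_sub, map_sum, map_pow, map_one] using this


lemma spow_x (m : ℕ) : SS ^ m * XX = (ε⁻¹) ^ m • (XX * SS ^ m) := by
  induction m with
  | zero => simp
  | succ n ih =>
      rw [pow_succ, mul_assoc, hsx, mul_smul_comm, ← mul_assoc, ih]
      rw [smul_mul_assoc, smul_smul, pow_succ, mul_assoc]
      ring_nf

lemma spow_y (m : ℕ) : SS ^ m * YY = ε ^ m • (YY * SS ^ m) := by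
  induction m with
  | zero => simp
  | succ n ih =>
      rw [pow_succ, mul_assoc, hsy, mul_smul_comm, ← mul_assoc, ih]
      rw [smul_mul_assoc, smul_smul, pow_succ, mul_assoc]
      ring_nf

lemma spow_xpow (m n : ℕ) : SS ^ m * XX ^ n = ((ε⁻¹) ^ m) ^ n • (XX ^ n * SS ^ m) := by
  induction n with
  | zero => simp
  | succ a ih =>
      rw [pow_succ (XX) a, ← mul_assoc, ih, smul_mul_assoc, mul_assoc, spow_x,
        mul_smul_comm, smul_smul, ← mul_assoc, ← pow_succ, ← pow_succ]

lemma spow_ypow (m n : ℕ) : SS ^ m * YY ^ n = (ε ^ m) ^ n • (YY ^ n * SS ^ m) := by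
  induction n with
  | zero => simp
  | succ a ih =>
      rw [pow_succ (YY) a, ← mul_assoc, ih, smul_mul_assoc, mul_assoc, spow_y,
        mul_smul_comm, smul_smul, ← mul_assoc, ← pow_succ, ← pow_succ]
/-- auxiliary element for the commutator formula `[y, x^n]`. -/
def Wc (n : ℕ) : Cherednik k r ε 1 c :=
  ((n : ℕ) : k) • 1 - ∑ j ∈ Finset.Icc 1 (r-1),
    (c j * ∑ m ∈ Finset.range n, ((ε⁻¹)^j)^m) • SS ^ j

lemma W_mul_x (n : ℕ) :
    Wc k r ε c n * XX = XX * (((n : ℕ) : k) • 1 - ∑ j ∈ Finset.Icc 1 (r-1),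
      (c j * (∑ m ∈ Finset.range n, ((ε⁻¹)^j)^m) * (ε⁻¹)^j) • SS ^ j) := by
  rw [Wc, sub_mul, mul_sub, smul_mul_assoc, one_mul, mul_smul_comm, mul_one,
    Finset.sum_mul, Finset.mul_sum]
  congr 1
  refine Finset.sum_congr rfl fun j hj => ?_
  rw [smul_mul_assoc, spow_x, smul_smul, mul_smul_comm]

lemma z_add_V (n : ℕ) :
    ((1 : Cherednik k r ε 1 c) - ∑ j ∈ Finset.Icc 1 (r-1), c j • SS ^ j) +
      ((((n+1 : ℕ)) : k) • 1 - ∑ j ∈ Finset.Icc 1 (r-1),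
        (c j * (∑ m ∈ Finset.range (n+1), ((ε⁻¹)^j)^m) * (ε⁻¹)^j) • SS ^ j)
      = Wc k r ε c (n+2) := by
  have h1 : ((1 : Cherednik k r ε 1 c) - ∑ j ∈ Finset.Icc 1 (r-1), c j • SS ^ j) +
      ((((n+1 : ℕ)) : k) • 1 - ∑ j ∈ Finset.Icc 1 (r-1),
        (c j * (∑ m ∈ Finset.range (n+1), ((ε⁻¹)^j)^m) * (ε⁻¹)^j) • SS ^ j)
      = (1 + (((n+1 : ℕ)) : k) • 1) - ((∑ j ∈ Finset.Icc 1 (r-1), c j • SS ^ j) +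
        ∑ j ∈ Finset.Icc 1 (r-1),
          (c j * (∑ m ∈ Finset.range (n+1), ((ε⁻¹)^j)^m) * (ε⁻¹)^j) • SS ^ j) := by
    abel
  rw [h1, Wc, ← Finset.sum_add_distrib]
  congr 1
  · push_cast
    module
  · refine Finset.sum_congr rfl fun j hj => ?_
    rw [← add_smul]
    congr 1
    rw [geom_sum_succ (n := n+1)]
    ring

lemma comm_yx (a : ℕ) :
    YY * XX ^ (a+1) = XX ^ (a+1) * YY + XX ^ a * Wc k r ε c (a+1) := by
  have hz : YY * XX = XX * YY + ((1 : Cherednik k r ε 1 c) -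
      ∑ j ∈ Finset.Icc 1 (r-1), c j • SS ^ j) := by
    have := hyx k r ε c
    rw [sub_eq_iff_eq_add] at this
    rw [this]; abel
  induction a with
  | zero =>
      rw [pow_one, pow_zero, one_mul, hz, Wc]
      congr 2
      · norm_num
      · refine Finset.sum_congr rfl fun j hj => ?_
        rw [Finset.sum_range_one, pow_zero, mul_one]
  | succ n ih =>
      calc YY * XX ^ (n+2) = (YY * XX ^ (n+1)) * XX := by rw [pow_succ, ← mul_assoc]
        _ = (XX ^ (n+1) * YY + XX ^ n * Wc k r ε c (n+1)) * XX := by rw [ih]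
        _ = XX ^ (n+1) * (YY * XX) + XX ^ n * (Wc k r ε c (n+1) * XX) := by
            rw [add_mul, mul_assoc, mul_assoc]
        _ = XX ^ (n+2) * YY + XX ^ (n+1) *
              (((1 : Cherednik k r ε 1 c) - ∑ j ∈ Finset.Icc 1 (r-1), c j • SS ^ j) +
              ((((n+1 : ℕ)) : k) • 1 - ∑ j ∈ Finset.Icc 1 (r-1),
                (c j * (∑ m ∈ Finset.range (n+1), ((ε⁻¹)^j)^m) * (ε⁻¹)^j) • SS ^ j)) := by
            rw [hz, W_mul_x, mul_add, mul_add, ← mul_assoc, ← pow_succ, ← mul_assoc,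
              ← pow_succ, add_assoc]
        _ = XX ^ (n+2) * YY + XX ^ (n+1) * Wc k r ε c (n+2) := by rw [z_add_V]
/-- auxiliary element for the commutator formula `[x, y^n]`. -/
def Wc' (n : ℕ) : Cherednik k r ε 1 c :=
  (∑ j ∈ Finset.Icc 1 (r-1), (c j * ∑ m ∈ Finset.range n, (ε^j)^m) • SS ^ j) -
    ((n : ℕ) : k) • 1

lemma W'_mul_y (n : ℕ) :
    Wc' k r ε c n * YY = YY * ((∑ j ∈ Finset.Icc 1 (r-1),
      (c j * (∑ m ∈ Finset.range n, (ε^j)^m) * ε^j) • SS ^ j) - ((n : ℕ) : k) • 1) := by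
  rw [Wc', sub_mul, mul_sub, smul_mul_assoc, one_mul, mul_smul_comm, mul_one,
    Finset.sum_mul, Finset.mul_sum]
  congr 1
  refine Finset.sum_congr rfl fun j hj => ?_
  rw [smul_mul_assoc, spow_y, smul_smul, mul_smul_comm]

lemma z_add_V' (n : ℕ) :
    ((∑ j ∈ Finset.Icc 1 (r-1), c j • SS ^ j) - (1 : Cherednik k r ε 1 c)) +
      ((∑ j ∈ Finset.Icc 1 (r-1),
        (c j * (∑ m ∈ Finset.range (n+1), (ε^j)^m) * ε^j) • SS ^ j) - (((n+1 : ℕ)) : k) • 1)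
      = Wc' k r ε c (n+2) := by
  have h1 : ((∑ j ∈ Finset.Icc 1 (r-1), c j • SS ^ j) - (1 : Cherednik k r ε 1 c)) +
      ((∑ j ∈ Finset.Icc 1 (r-1),
        (c j * (∑ m ∈ Finset.range (n+1), (ε^j)^m) * ε^j) • SS ^ j) - (((n+1 : ℕ)) : k) • 1)
      = ((∑ j ∈ Finset.Icc 1 (r-1), c j • SS ^ j) +
        ∑ j ∈ Finset.Icc 1 (r-1),
          (c j * (∑ m ∈ Finset.range (n+1), (ε^j)^m) * ε^j) • SS ^ j) -
        (1 + (((n+1 : ℕ)) : k) • 1) := by abel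
  rw [h1, Wc', ← Finset.sum_add_distrib]
  congr 1
  · refine Finset.sum_congr rfl fun j hj => ?_
    rw [← add_smul]
    congr 1
    rw [geom_sum_succ (n := n+1)]
    ring
  · push_cast
    module

lemma comm_xy (a : ℕ) :
    XX * YY ^ (a+1) = YY ^ (a+1) * XX + YY ^ a * Wc' k r ε c (a+1) := by
  have hz : XX * YY = YY * XX + ((∑ j ∈ Finset.Icc 1 (r-1), c j • SS ^ j) -
      (1 : Cherednik k r ε 1 c)) := by
    have := hyx k r ε c
    rw [sub_eq_iff_eq_add] at this
    rw [this]; abel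
  induction a with
  | zero =>
      rw [pow_one, pow_zero, one_mul, hz, Wc']
      congr 2
      · refine Finset.sum_congr rfl fun j hj => ?_
        rw [Finset.sum_range_one, pow_zero, mul_one]
      · norm_num
  | succ n ih =>
      calc XX * YY ^ (n+2) = (XX * YY ^ (n+1)) * YY := by rw [pow_succ, ← mul_assoc]
        _ = (YY ^ (n+1) * XX + YY ^ n * Wc' k r ε c (n+1)) * YY := by rw [ih]
        _ = YY ^ (n+1) * (XX * YY) + YY ^ n * (Wc' k r ε c (n+1) * YY) := by
            rw [add_mul, mul_assoc, mul_assoc]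
        _ = YY ^ (n+2) * XX + YY ^ (n+1) *
              (((∑ j ∈ Finset.Icc 1 (r-1), c j • SS ^ j) - (1 : Cherednik k r ε 1 c)) +
              ((∑ j ∈ Finset.Icc 1 (r-1),
                (c j * (∑ m ∈ Finset.range (n+1), (ε^j)^m) * ε^j) • SS ^ j) -
                (((n+1 : ℕ)) : k) • 1)) := by
            rw [hz, W'_mul_y, mul_add, mul_add, ← mul_assoc, ← pow_succ, ← mul_assoc,
              ← pow_succ, add_assoc]
        _ = YY ^ (n+2) * XX + YY ^ (n+1) * Wc' k r ε c (n+2) := by rw [z_add_V']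
lemma eps_pow_r (hε : IsPrimitiveRoot ε r) : ε ^ r = 1 := hε.pow_eq_one

lemma inv_eps_pow_pr (p : ℕ) (hε : IsPrimitiveRoot ε r) : (ε⁻¹) ^ (p * r) = 1 := by
  rw [inv_pow, inv_eq_one, mul_comm, pow_mul, hε.pow_eq_one, one_pow]

lemma W_pr (p : ℕ) [CharP k p] (hε : IsPrimitiveRoot ε r) :
    Wc k r ε c (p * r) = 0 := by
  rw [Wc]
  have hp0 : (((p * r : ℕ)) : k) = 0 := by
    push_cast
    rw [CharP.cast_eq_zero]
    ring
  rw [hp0, zero_smul, zero_sub, neg_eq_zero]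
  refine Finset.sum_eq_zero fun j hj => ?_
  obtain ⟨hj1, hj2⟩ := Finset.mem_Icc.mp hj
  have hq1 : (ε⁻¹) ^ j ≠ 1 := by
    intro h
    rw [inv_pow, inv_eq_one] at h
    have hdvd := (hε.pow_eq_one_iff_dvd j).mp h
    have := Nat.le_of_dvd (by omega) hdvd
    omega
  have hsum : ∑ m ∈ Finset.range (p * r), ((ε⁻¹) ^ j) ^ m = 0 := by
    rw [geom_sum_eq hq1]
    have hq : ((ε⁻¹) ^ j) ^ (p * r) = 1 := by
      rw [← pow_mul, mul_comm j, pow_mul, inv_eps_pow_pr k r ε p hε, one_pow]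
    rw [hq, sub_self, zero_div]
  rw [hsum, mul_zero, zero_smul]

lemma W'_pr (p : ℕ) [CharP k p] (hε : IsPrimitiveRoot ε r) :
    Wc' k r ε c (p * r) = 0 := by
  rw [Wc']
  have hp0 : (((p * r : ℕ)) : k) = 0 := by
    push_cast
    rw [CharP.cast_eq_zero]
    ring
  rw [hp0, zero_smul, sub_zero]
  refine Finset.sum_eq_zero fun j hj => ?_
  obtain ⟨hj1, hj2⟩ := Finset.mem_Icc.mp hj
  have hq1 : ε ^ j ≠ 1 := by
    intro h
    have hdvd := (hε.pow_eq_one_iff_dvd j).mp h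
    have := Nat.le_of_dvd (by omega) hdvd
    omega
  have hsum : ∑ m ∈ Finset.range (p * r), (ε ^ j) ^ m = 0 := by
    rw [geom_sum_eq hq1]
    have hq : (ε ^ j) ^ (p * r) = 1 := by
      rw [← pow_mul, mul_comm j, mul_comm p, mul_assoc, pow_mul, hε.pow_eq_one, one_pow]
    rw [hq, sub_self, zero_div]
  rw [hsum, mul_zero, zero_smul]

lemma adjoin_xys : Algebra.adjoin k ({XX, YY, SS} : Set (Cherednik k r ε 1 c)) = ⊤ := by
  rw [eq_top_iff]
  rintro h -
  obtain ⟨a, rfl⟩ := RingQuot.mkAlgHom_surjective k (CherednikRel k r ε 1 c) h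
  induction a using FreeAlgebra.induction with
  | grade0 t =>
      rw [AlgHom.commutes]
      exact Subalgebra.algebraMap_mem _ t
  | grade1 i =>
      fin_cases i
      · exact Algebra.subset_adjoin (by left; rfl)
      · exact Algebra.subset_adjoin (by right; left; rfl)
      · exact Algebra.subset_adjoin (by right; right; rfl)
  | mul a b ha hb => rw [map_mul]; exact mul_mem ha hb
  | add a b ha hb => rw [map_add]; exact add_mem ha hb

lemma central_of_comm (z : Cherednik k r ε 1 c)
    (hx : z * XX = XX * z) (hy : z * YY = YY * z) (hs : z * SS = SS * z) :
    z ∈ Subalgebra.center k (Cherednik k r ε 1 c) := by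
  rw [Subalgebra.mem_center_iff]
  intro b
  have hle : Algebra.adjoin k ({XX, YY, SS} : Set (Cherednik k r ε 1 c)) ≤
      Subalgebra.centralizer k ({z} : Set (Cherednik k r ε 1 c)) := by
    rw [Algebra.adjoin_le_iff]
    rintro w (rfl | rfl | rfl) <;>
      · simp only [SetLike.mem_coe]
        rw [Subalgebra.mem_centralizer_iff]
        rintro g rfl
        first | exact hx | exact hy | exact hs
  have hb : b ∈ Subalgebra.centralizer k ({z} : Set (Cherednik k r ε 1 c)) := by
    apply hle
    rw [adjoin_xys]
    trivial
  exact ((Subalgebra.mem_centralizer_iff k).mp hb z rfl).symm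

lemma xpr_central (p : ℕ) [CharP k p] (hp1 : 1 ≤ p) (hr : 1 ≤ r)
    (hε : IsPrimitiveRoot ε r) :
    XX ^ (p * r) ∈ Subalgebra.center k (Cherednik k r ε 1 c) := by
  have hpr1 : 1 ≤ p * r := Nat.one_le_iff_ne_zero.mpr (by positivity)
  apply central_of_comm
  · rw [← pow_succ, ← pow_succ']
  · have h := comm_yx k r ε c (p * r - 1)
    rw [Nat.sub_add_cancel hpr1, W_pr k r ε c p hε, mul_zero, add_zero] at h
    exact h.symm
  · have h := spow_xpow k r ε c 1 (p * r)
    rw [pow_one, pow_one, inv_eps_pow_pr k r ε p hε, one_smul] at h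
    exact h.symm

lemma ypr_central (p : ℕ) [CharP k p] (hp1 : 1 ≤ p) (hr : 1 ≤ r)
    (hε : IsPrimitiveRoot ε r) :
    YY ^ (p * r) ∈ Subalgebra.center k (Cherednik k r ε 1 c) := by
  have hpr1 : 1 ≤ p * r := Nat.one_le_iff_ne_zero.mpr (by positivity)
  apply central_of_comm
  · have h := comm_xy k r ε c (p * r - 1)
    rw [Nat.sub_add_cancel hpr1, W'_pr k r ε c p hε, mul_zero, add_zero] at h
    exact h.symm
  · rw [← pow_succ, ← pow_succ']
  · have h := spow_ypow k r ε c 1 (p * r)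
    have he : (ε : k) ^ (p * r) = 1 := by
      rw [mul_comm, pow_mul, hε.pow_eq_one, one_pow]
    rw [pow_one, pow_one, he, one_smul] at h
    exact h.symm
lemma Wmul_mem (N : Submodule k (Cherednik k r ε 1 c))
    (hmono : ∀ a b l : ℕ, XX ^ a * YY ^ b * SS ^ l ∈ N) (n a b l : ℕ) :
    XX ^ a * Wc k r ε c n * (YY ^ b * SS ^ l) ∈ N := by
  rw [mul_assoc, Wc, sub_mul, mul_sub]
  apply sub_mem
  · rw [smul_mul_assoc, one_mul, mul_smul_comm, ← mul_assoc]
    exact N.smul_mem _ (hmono a b l)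
  · rw [Finset.sum_mul, Finset.mul_sum]
    apply Submodule.sum_mem
    intro j hj
    rw [smul_mul_assoc, mul_smul_comm]
    apply N.smul_mem
    rw [← mul_assoc (SS ^ j), spow_ypow, smul_mul_assoc, mul_smul_comm]
    apply N.smul_mem
    rw [mul_assoc (YY ^ b), ← pow_add, ← mul_assoc]
    exact hmono a b (j + l)

lemma span_mono_top :
    Submodule.span k {z : Cherednik k r ε 1 c | ∃ a b l : ℕ,
      z = XX ^ a * YY ^ b * SS ^ l} = ⊤ := by
  set N := Submodule.span k {z : Cherednik k r ε 1 c | ∃ a b l : ℕ,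
      z = XX ^ a * YY ^ b * SS ^ l} with hN
  have hmono : ∀ a b l : ℕ, XX ^ a * YY ^ b * SS ^ l ∈ N := fun a b l =>
    Submodule.subset_span ⟨a, b, l, rfl⟩
  have hXmem : ∀ n ∈ N, XX * n ∈ N := by
    intro n hn
    induction hn using Submodule.span_induction with
    | mem z hz =>
        obtain ⟨a, b, l, rfl⟩ := hz
        have : XX * (XX ^ a * YY ^ b * SS ^ l) = XX ^ (a+1) * YY ^ b * SS ^ l := by
          simp only [← mul_assoc]
          rw [← pow_succ']
        rw [this]; exact hmono _ _ _
    | zero => rw [mul_zero]; exact N.zero_mem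
    | add u v hu hv ihu ihv => rw [mul_add]; exact N.add_mem ihu ihv
    | smul a u hu ihu => rw [mul_smul_comm]; exact N.smul_mem _ ihu
  have hSmem : ∀ n ∈ N, SS * n ∈ N := by
    intro n hn
    induction hn using Submodule.span_induction with
    | mem z hz =>
        obtain ⟨a, b, l, rfl⟩ := hz
        have h1 : SS * XX ^ a = (ε⁻¹) ^ a • (XX ^ a * SS) := by
          simpa using spow_xpow k r ε c 1 a
        have h2 : SS * YY ^ b = ε ^ b • (YY ^ b * SS) := by
          simpa using spow_ypow k r ε c 1 b
        have : SS * (XX ^ a * YY ^ b * SS ^ l) =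
            ((ε⁻¹) ^ a * ε ^ b) • (XX ^ a * YY ^ b * SS ^ (l+1)) := by
          calc SS * (XX ^ a * YY ^ b * SS ^ l) = (SS * XX ^ a) * (YY ^ b * SS ^ l) := by
                simp only [mul_assoc]
            _ = (ε⁻¹) ^ a • (XX ^ a * ((SS * YY ^ b) * SS ^ l)) := by
                rw [h1, smul_mul_assoc, mul_assoc, mul_assoc]
            _ = (ε⁻¹) ^ a • (XX ^ a * (ε ^ b • ((YY ^ b * SS) * SS ^ l))) := by
                rw [h2, smul_mul_assoc]
            _ = ((ε⁻¹) ^ a * ε ^ b) • (XX ^ a * YY ^ b * SS ^ (l+1)) := by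
                rw [mul_assoc (YY ^ b), ← pow_succ', mul_smul_comm, smul_smul,
                  ← mul_assoc (XX ^ a)]
        rw [this]
        exact N.smul_mem _ (hmono _ _ _)
    | zero => rw [mul_zero]; exact N.zero_mem
    | add u v hu hv ihu ihv => rw [mul_add]; exact N.add_mem ihu ihv
    | smul a u hu ihu => rw [mul_smul_comm]; exact N.smul_mem _ ihu
  have hYmem : ∀ n ∈ N, YY * n ∈ N := by
    intro n hn
    induction hn using Submodule.span_induction with
    | mem z hz =>
        obtain ⟨a, b, l, rfl⟩ := hz
        cases a with
        | zero =>
            have : YY * (XX ^ 0 * YY ^ b * SS ^ l) = XX ^ 0 * YY ^ (b+1) * SS ^ l := by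
              simp only [pow_zero, one_mul, ← mul_assoc]
              rw [← pow_succ']
            rw [this]; exact hmono _ _ _
        | succ a =>
            have hrw : YY * (XX ^ (a+1) * YY ^ b * SS ^ l) =
                (YY * XX ^ (a+1)) * (YY ^ b * SS ^ l) := by
              simp only [mul_assoc]
            rw [hrw, comm_yx, add_mul]
            apply N.add_mem
            · have : XX ^ (a+1) * YY * (YY ^ b * SS ^ l) =
                  XX ^ (a+1) * YY ^ (b+1) * SS ^ l := by
                rw [mul_assoc (XX ^ (a+1)), ← mul_assoc YY, ← pow_succ', ← mul_assoc]
              rw [this]; exact hmono _ _ _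
            · exact Wmul_mem k r ε c N hmono (a+1) a b l
    | zero => rw [mul_zero]; exact N.zero_mem
    | add u v hu hv ihu ihv => rw [mul_add]; exact N.add_mem ihu ihv
    | smul a u hu ihu => rw [mul_smul_comm]; exact N.smul_mem _ ihu
  let P : Subalgebra k (Cherednik k r ε 1 c) :=
    { carrier := {w | ∀ n ∈ N, w * n ∈ N}
      mul_mem' := fun {a b} ha hb n hn => by
        rw [mul_assoc]; exact ha _ (hb _ hn)
      add_mem' := fun {a b} ha hb n hn => by
        rw [add_mul]; exact N.add_mem (ha _ hn) (hb _ hn)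
      one_mem' := fun n hn => by rwa [one_mul]
      algebraMap_mem' := fun t n hn => by
        rw [Algebra.algebraMap_eq_smul_one, smul_mul_assoc, one_mul]
        exact N.smul_mem t hn }
  have hP : ∀ w : Cherednik k r ε 1 c, w ∈ P := by
    intro w
    have hle : Algebra.adjoin k ({XX, YY, SS} : Set (Cherednik k r ε 1 c)) ≤ P := by
      apply Algebra.adjoin_le
      rintro g (rfl | rfl | rfl)
      · exact hXmem
      · exact hYmem
      · exact hSmem
    exact hle (by rw [adjoin_xys]; trivial)
  rw [eq_top_iff]
  intro w _
  have h1 : (1 : Cherednik k r ε 1 c) ∈ N := by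
    have := hmono 0 0 0
    simpa using this
  have := hP w 1 h1
  rwa [mul_one] at this
end Aux
/-- Corollary 3.3: `H` is finitely generated as a module over its center; in fact the
elements `x^i y^j s^l` with `0 ≤ i, j ≤ pr-1`, `0 ≤ l ≤ r-1` generate `H` over the center. -/
theorem stmt12 (k : Type u) [Field k] (p : ℕ) (hp : p.Prime) [CharP k p]
    (r : ℕ) (hr : 1 ≤ r) (hpr : ¬ p ∣ r) (ε : k) (hε : IsPrimitiveRoot ε r)
    (c : ℕ → k) :
    Module.Finite (Subalgebra.center k (Cherednik k r ε 1 c)) (Cherednik k r ε 1 c) ∧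
    Submodule.span (Subalgebra.center k (Cherednik k r ε 1 c))
      {z : Cherednik k r ε 1 c | ∃ (i j l : ℕ), i ≤ p * r - 1 ∧ j ≤ p * r - 1 ∧ l ≤ r - 1 ∧
        z = Hx k r ε 1 c ^ i * Hy k r ε 1 c ^ j * Hs k r ε 1 c ^ l} = ⊤ := by
  have hp1 : 1 ≤ p := hp.pos
  have hpr1 : 0 < p * r := Nat.mul_pos hp.pos hr
  set Z := Subalgebra.center k (Cherednik k r ε 1 c) with hZ
  set S : Set (Cherednik k r ε 1 c) :=
    {z : Cherednik k r ε 1 c | ∃ (i j l : ℕ), i ≤ p * r - 1 ∧ j ≤ p * r - 1 ∧ l ≤ r - 1 ∧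
      z = Hx k r ε 1 c ^ i * Hy k r ε 1 c ^ j * Hs k r ε 1 c ^ l} with hS
  set M := Submodule.span Z S with hM
  have hXc : Hx k r ε 1 c ^ (p * r) ∈ Z := xpr_central k r ε c p hp1 hr hε
  have hYc : Hy k r ε 1 c ^ (p * r) ∈ Z := ypr_central k r ε c p hp1 hr hε
  have hmonoS : ∀ a b l : ℕ,
      Hx k r ε 1 c ^ a * Hy k r ε 1 c ^ b * Hs k r ε 1 c ^ l ∈ M := by
    intro a b l
    have hxa : Hx k r ε 1 c ^ a =
        (Hx k r ε 1 c ^ (p * r)) ^ (a / (p * r)) * Hx k r ε 1 c ^ (a % (p * r)) := by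
      rw [← pow_mul, ← pow_add, Nat.div_add_mod]
    have hyb : Hy k r ε 1 c ^ b =
        (Hy k r ε 1 c ^ (p * r)) ^ (b / (p * r)) * Hy k r ε 1 c ^ (b % (p * r)) := by
      rw [← pow_mul, ← pow_add, Nat.div_add_mod]
    have hsl : Hs k r ε 1 c ^ l = Hs k r ε 1 c ^ (l % r) := by
      conv_lhs => rw [← Nat.div_add_mod l r]
      rw [pow_add, pow_mul, hs_pow, one_pow, one_mul]
    set Xq := (Hx k r ε 1 c ^ (p * r)) ^ (a / (p * r)) with hXq
    set Yq := (Hy k r ε 1 c ^ (p * r)) ^ (b / (p * r)) with hYq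
    have hYqc : Yq ∈ Z := Z.pow_mem hYc _
    have hcomm : Hx k r ε 1 c ^ (a % (p * r)) * Yq = Yq * Hx k r ε 1 c ^ (a % (p * r)) :=
      Subalgebra.mem_center_iff.mp hYqc _
    have heq : Hx k r ε 1 c ^ a * Hy k r ε 1 c ^ b * Hs k r ε 1 c ^ l =
        (Xq * Yq) * (Hx k r ε 1 c ^ (a % (p * r)) * Hy k r ε 1 c ^ (b % (p * r)) *
          Hs k r ε 1 c ^ (l % r)) := by
      rw [hxa, hyb, hsl]
      calc (Xq * Hx k r ε 1 c ^ (a % (p * r))) * (Yq * Hy k r ε 1 c ^ (b % (p * r))) *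
            Hs k r ε 1 c ^ (l % r)
          = Xq * ((Hx k r ε 1 c ^ (a % (p * r)) * Yq) *
              (Hy k r ε 1 c ^ (b % (p * r)) * Hs k r ε 1 c ^ (l % r))) := by
            simp only [mul_assoc]
        _ = Xq * ((Yq * Hx k r ε 1 c ^ (a % (p * r))) *
              (Hy k r ε 1 c ^ (b % (p * r)) * Hs k r ε 1 c ^ (l % r))) := by rw [hcomm]
        _ = (Xq * Yq) * (Hx k r ε 1 c ^ (a % (p * r)) * Hy k r ε 1 c ^ (b % (p * r)) *
              Hs k r ε 1 c ^ (l % r)) := by simp only [mul_assoc]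
    have hzc : Xq * Yq ∈ Z := Z.mul_mem (Z.pow_mem hXc _) hYqc
    have hmem : Hx k r ε 1 c ^ (a % (p * r)) * Hy k r ε 1 c ^ (b % (p * r)) *
        Hs k r ε 1 c ^ (l % r) ∈ S := by
      refine ⟨a % (p * r), b % (p * r), l % r, ?_, ?_, ?_, rfl⟩
      · have := Nat.mod_lt a hpr1; omega
      · have := Nat.mod_lt b hpr1; omega
      · have := Nat.mod_lt l (by omega : 0 < r); omega
    have hsm := M.smul_mem (⟨Xq * Yq, hzc⟩ : Z) (Submodule.subset_span hmem)
    rw [heq]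
    have : (⟨Xq * Yq, hzc⟩ : Z) • (Hx k r ε 1 c ^ (a % (p * r)) *
        Hy k r ε 1 c ^ (b % (p * r)) * Hs k r ε 1 c ^ (l % r)) =
        (Xq * Yq) * (Hx k r ε 1 c ^ (a % (p * r)) * Hy k r ε 1 c ^ (b % (p * r)) *
          Hs k r ε 1 c ^ (l % r)) := by
      rw [Subalgebra.smul_def, smul_eq_mul]
    rwa [this] at hsm
  have hspan : Submodule.span Z S = ⊤ := by
    rw [eq_top_iff]
    intro w hwt
    clear hwt
    have hw : w ∈ Submodule.span k {z : Cherednik k r ε 1 c | ∃ a b l : ℕ,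
        z = Hx k r ε 1 c ^ a * Hy k r ε 1 c ^ b * Hs k r ε 1 c ^ l} := by
      rw [span_mono_top]; trivial
    induction hw using Submodule.span_induction with
    | mem z hz => obtain ⟨a, b, l, rfl⟩ := hz; exact hmonoS a b l
    | zero => exact M.zero_mem
    | add u v hu hv ihu ihv => exact M.add_mem ihu ihv
    | smul a u hu ihu =>
        have : a • u = (⟨algebraMap k (Cherednik k r ε 1 c) a,
            Z.algebraMap_mem a⟩ : Z) • u := by
          rw [Subalgebra.smul_def, smul_eq_mul, Algebra.smul_def]
        rw [this]
        exact M.smul_mem _ ihu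
  have hfin : S.Finite := by
    have hsub : S ⊆ (fun t : ℕ × ℕ × ℕ =>
        Hx k r ε 1 c ^ t.1 * Hy k r ε 1 c ^ t.2.1 * Hs k r ε 1 c ^ t.2.2) ''
        (Set.Iic (p * r - 1) ×ˢ Set.Iic (p * r - 1) ×ˢ Set.Iic (r - 1)) := by
      rintro z ⟨i, j, l, hi, hj, hl, rfl⟩
      exact ⟨(i, j, l), ⟨hi, hj, hl⟩, rfl⟩
    exact (((Set.finite_Iic _).prod ((Set.finite_Iic _).prod
      (Set.finite_Iic _))).image _).subset hsub
  refine ⟨⟨⟨hfin.toFinset, ?_⟩⟩, hspan⟩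
  rw [Set.Finite.coe_toFinset]
  exact hspan
end
end
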